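/- arXiv:1705.05169 — 6 statements merged into one kernel-verified Lean document; each statement's English description precedes it below -/
import Mathlib

section
/- Let (P, ≼, ∧) be a locally finite meet semilattice with least element 0̂, let f be a complex-valued function on P, and let S = {x_1, …, x_n} be a finite meet closed subset of P with distinct elements, indexed so that x_i ≼ x_j only if i ≤ j. Then (S)_f = E D Eᵀ, where E is the n×n matrix with E_{ij} = 1 if x_j ≼ x_i and E_{ij} = 0 otherwise, and D = diag(d_1, …, d_n) with d_i = ∑_{z ≼ x_i, z ⋠ x_j for all j < i} (f_d * μ)(0̂, z). -/
/-!
Write `g z = ∑_{w ≤ z} f w μ(w, z)`. Möbius inversion gives `f y = ∑_{z ≤ y} g z`, while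
`(E D Eᵀ)_{ij} = ∑_{x_k ≤ x_i ⊓ x_j} d_k`. Since `S` is meet closed, `x_i ⊓ x_j = x_m` for
some `m`, and every `z ≤ x_m` lies in the set defining `d_k` for exactly one `k`: the least
index with `z ≤ x_k`, for which `x_k ≤ x_m` because `x_k ⊓ x_m ∈ S` cannot have a smaller
index. Hence both sides equal `∑_{z ≤ x_m} g z = f (x_m)`.
-/

open Matrix Finset

section Mobius

variable {P R : Type*} [PartialOrder P] [LocallyFiniteOrder P] [Ring R] {mu : P → P → R}

theorem sum_Icc_mu_eq_zero
    (hmu_lt : ∀ p q : P, p < q → mu p q = -∑ r ∈ Ico p q, mu p r)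
    {w y : P} (hwy : w < y) : ∑ z ∈ Icc w y, mu w z = 0 := by
  rw [Icc_eq_cons_Ico hwy.le, sum_cons, hmu_lt _ _ hwy, neg_add_cancel]

theorem sum_Icc_sum_Icc_mul_mu (hmu_self : ∀ p, mu p p = 1)
    (hmu_lt : ∀ p q : P, p < q → mu p q = -∑ r ∈ Ico p q, mu p r)
    (f : P → R) {a y : P} (hay : a ≤ y) :
    ∑ z ∈ Icc a y, ∑ w ∈ Icc a z, f w * mu w z = f y := by
  have hswap : ∑ z ∈ Icc a y, ∑ w ∈ Icc a z, f w * mu w z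
      = ∑ w ∈ Icc a y, f w * ∑ z ∈ Icc w y, mu w z := by
    simp_rw [mul_sum]
    refine sum_comm' fun z w => ?_
    simp only [mem_Icc]
    constructor
    · rintro ⟨⟨_, hzy⟩, haw, hwz⟩
      exact ⟨⟨hwz, hzy⟩, haw, hwz.trans hzy⟩
    · rintro ⟨⟨hwz, hzy⟩, haw, _⟩
      exact ⟨⟨haw.trans hwz, hzy⟩, haw, hwz⟩
  rw [hswap, sum_eq_single_of_mem y (right_mem_Icc.2 hay) fun w hw hwy => by
    rw [sum_Icc_mu_eq_zero hmu_lt (lt_of_le_of_ne (mem_Icc.1 hw).2 hwy), mul_zero]]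
  simp [hmu_self]

end Mobius

section MeetClosed

variable {P : Type*} [SemilatticeInf P] {n : ℕ} {x : Fin n → P}

theorem le_of_forall_lt_not_le (hord : ∀ i j, x i ≤ x j → i ≤ j)
    (hmeet : ∀ i j, ∃ k, x k = x i ⊓ x j) {z : P} {k m : Fin n} (hzk : z ≤ x k)
    (hmin : ∀ j < k, ¬ z ≤ x j) (hzm : z ≤ x m) : x k ≤ x m := by
  obtain ⟨l, hl⟩ := hmeet k m
  have hlk : l = k :=
    (hord l k (hl ▸ inf_le_left)).eq_of_not_lt fun h => hmin l h (hl ▸ le_inf hzk hzm)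
  exact hlk ▸ hl ▸ inf_le_right

variable [OrderBot P] [LocallyFiniteOrder P] [DecidableRel ((· ≤ ·) : P → P → Prop)]

theorem sum_Icc_eq_sum_sum_filter_forall_lt_not_le (hord : ∀ i j, x i ≤ x j → i ≤ j)
    (hmeet : ∀ i j, ∃ k, x k = x i ⊓ x j) {M : Type*} [AddCommMonoid M] (g : P → M)
    (m : Fin n) :
    ∑ z ∈ Icc ⊥ (x m), g z = ∑ k with x k ≤ x m,
      ∑ z ∈ (Icc ⊥ (x k)).filter (fun z => ∀ j, j < k → ¬ z ≤ x j), g z := by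
  classical
  rw [← sum_biUnion]
  · congr 1
    ext z
    simp only [mem_biUnion, mem_filter, mem_Icc, bot_le, true_and, mem_univ]
    constructor
    · intro hzm
      obtain ⟨k, hzk, hmin⟩ := wellFounded_lt.has_min {k | z ≤ x k} ⟨m, hzm⟩
      have hmin' : ∀ j < k, ¬ z ≤ x j := fun j hj hzj => hmin j hzj hj
      exact ⟨k, le_of_forall_lt_not_le hord hmeet hzk hmin' hzm, hzk, hmin'⟩
    · rintro ⟨k, hkm, hzk, _⟩
      exact hzk.trans hkm
  · intro a _ b _ hab
    refine disjoint_left.2 fun z hza hzb => ?_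
    simp only [mem_filter, mem_Icc] at hza hzb
    rcases lt_or_gt_of_ne hab with h | h
    · exact hzb.2 a h hza.1.2
    · exact hza.2 b h hzb.1.2

end MeetClosed

theorem mul_diagonal_mul_transpose_apply_eq_sum_le_inf {P R : Type*} [SemilatticeInf P]
    [DecidableRel ((· ≤ ·) : P → P → Prop)] [Semiring R] {n : ℕ} {x : Fin n → P}
    {E : Matrix (Fin n) (Fin n) R} (hE : ∀ i j, E i j = if x j ≤ x i then 1 else 0)
    (d : Fin n → R) (i j : Fin n) :
    (E * diagonal d * Eᵀ) i j = ∑ k with x k ≤ x i ⊓ x j, d k := by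
  rw [mul_apply]
  simp only [mul_diagonal, transpose_apply, hE, sum_filter, le_inf_iff]
  refine sum_congr rfl fun k _ => ?_
  split_ifs <;> simp_all

theorem meet_matrix_factorization_general
    {P : Type*} [SemilatticeInf P] [OrderBot P] [LocallyFiniteOrder P]
    [DecidableRel ((· ≤ ·) : P → P → Prop)]
    (mu : P → P → ℂ)
    (hmu_self : ∀ p, mu p p = 1)
    (hmu_lt : ∀ p q : P, p < q → mu p q = -∑ r ∈ Finset.Ico p q, mu p r)
    (f : P → ℂ)
    {n : ℕ} (x : Fin n → P)
    (hord : ∀ i j, x i ≤ x j → i ≤ j)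
    (hmeet : ∀ i j, ∃ k, x k = x i ⊓ x j)
    (E : Matrix (Fin n) (Fin n) ℂ)
    (hE : ∀ i j, E i j = if x j ≤ x i then 1 else 0)
    (d : Fin n → ℂ)
    (hd : ∀ i, d i = ∑ z ∈ (Finset.Icc ⊥ (x i)).filter
        (fun z => ∀ j, j < i → ¬ z ≤ x j),
      ∑ w ∈ Finset.Icc ⊥ z, f w * mu w z) :
    (Matrix.of fun i j => f (x i ⊓ x j)) = E * Matrix.diagonal d * Eᵀ := by
  ext i j
  obtain ⟨m, hm⟩ := hmeet i j
  rw [of_apply, mul_diagonal_mul_transpose_apply_eq_sum_le_inf hE, ← hm,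
    ← sum_Icc_sum_Icc_mul_mu hmu_self hmu_lt f bot_le,
    sum_Icc_eq_sum_sum_filter_forall_lt_not_le hord hmeet]
  exact sum_congr rfl fun k _ => (hd k).symm

/-- Let `(P, ≼, ∧)` be a locally finite meet semilattice with least
element `⊥`, `f : P → ℂ`, and `S = {x 0, …, x (n-1)}` a meet closed subset with distinct
elements indexed so that `x i ≼ x j` only if `i ≤ j`.  Then the meet matrix `(S)_f`
factors as `E * D * Eᵀ`, where `E i j = 1` iff `x j ≼ x i` and
`D = diag(d)` with `d i = ∑_{z ≼ x i, z ⋠ x j for j < i} (f_d * μ)(⊥, z)`. -/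
theorem meet_matrix_factorization
    {P : Type*} [SemilatticeInf P] [OrderBot P] [LocallyFiniteOrder P]
    [DecidableRel ((· ≤ ·) : P → P → Prop)]
    (mu : P → P → ℂ)
    (hmu_self : ∀ p, mu p p = 1)
    (hmu_lt : ∀ p q : P, p < q → mu p q = -∑ r ∈ Finset.Ico p q, mu p r)
    (hmu_nle : ∀ p q : P, ¬ p ≤ q → mu p q = 0)
    (f : P → ℂ)
    {n : ℕ} (x : Fin n → P) (hinj : Function.Injective x)
    (hord : ∀ i j, x i ≤ x j → i ≤ j)
    (hmeet : ∀ i j, ∃ k, x k = x i ⊓ x j)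
    (E : Matrix (Fin n) (Fin n) ℂ)
    (hE : ∀ i j, E i j = if x j ≤ x i then 1 else 0)
    (d : Fin n → ℂ)
    (hd : ∀ i, d i = ∑ z ∈ (Finset.Icc ⊥ (x i)).filter
        (fun z => ∀ j, j < i → ¬ z ≤ x j),
      ∑ w ∈ Finset.Icc ⊥ z, f w * mu w z) :
    (Matrix.of fun i j => f (x i ⊓ x j)) = E * Matrix.diagonal d * Eᵀ :=
  meet_matrix_factorization_general mu hmu_self hmu_lt f x hord hmeet E hE d hd
end

section
/- Let (P, ≼, ∧, ∨) be a lattice, let f be a semimultiplicative complex-valued function on P with f(x) ≠ 0 for all x ∈ P, and let S = {x_1, …, x_n} be a finite subset of P with distinct elements, indexed so that x_i ≼ x_j only if i ≤ j. Let R = diag(f(x_1), …, f(x_n)). Then [S]_f = R (S)_{1/f} R, i.e., f(x_i ∨ x_j) = f(x_i) · (1/f)(x_i ∧ x_j) · f(x_j) in matrix form. -/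
open Matrix

theorem apply_sup_eq_mul_inv_apply_inf_mul {P K : Type*} [Lattice P] [CommGroupWithZero K]
    {f : P → K} (hsemi : ∀ p q : P, f (p ⊓ q) * f (p ⊔ q) = f p * f q) {p q : P}
    (hinf : f (p ⊓ q) ≠ 0) :
    f (p ⊔ q) = f p * (f (p ⊓ q))⁻¹ * f q := by
  rw [mul_right_comm, eq_mul_inv_iff_mul_eq₀ hinf, mul_comm, hsemi]

theorem diagonal_mul_mul_diagonal_apply {n α : Type*} [Fintype n] [DecidableEq n]
    [NonUnitalNonAssocSemiring α] (d : n → α) (A : Matrix n n α) (i j : n) :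
    (diagonal d * A * diagonal d) i j = d i * A i j * d j := by
  rw [mul_diagonal, diagonal_mul]

theorem join_matrix_eq_R_meet_R_general
    {P : Type*} [Lattice P]
    (f : P → ℂ) (hf : ∀ p, f p ≠ 0)
    (hsemi : ∀ p q : P, f (p ⊓ q) * f (p ⊔ q) = f p * f q)
    {n : ℕ} (x : Fin n → P) :
    (Matrix.of fun i j => f (x i ⊔ x j)) =
      Matrix.diagonal (fun i => f (x i)) *
        (Matrix.of fun i j => (f (x i ⊓ x j))⁻¹) *
        Matrix.diagonal (fun i => f (x i)) := by
  ext i j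
  rw [diagonal_mul_mul_diagonal_apply, of_apply, of_apply]
  exact apply_sup_eq_mul_inv_apply_inf_mul hsemi (hf _)

/-- If `f` is a nonvanishing semimultiplicative function on a lattice `P`
and `S = {x 0, …, x (n-1)}` has distinct elements indexed so that `x i ≼ x j` only if
`i ≤ j`, then the join matrix `[S]_f` equals `R * (S)_{1/f} * R`, where
`R = diag(f (x 0), …, f (x (n-1)))`. -/
theorem join_matrix_eq_R_meet_R
    {P : Type*} [Lattice P]
    (f : P → ℂ) (hf : ∀ p, f p ≠ 0)
    (hsemi : ∀ p q : P, f (p ⊓ q) * f (p ⊔ q) = f p * f q)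
    {n : ℕ} (x : Fin n → P) (hinj : Function.Injective x)
    (hord : ∀ i j, x i ≤ x j → i ≤ j) :
    (Matrix.of fun i j => f (x i ⊔ x j)) =
      Matrix.diagonal (fun i => f (x i)) *
        (Matrix.of fun i j => (f (x i ⊓ x j))⁻¹) *
        Matrix.diagonal (fun i => f (x i)) :=
  join_matrix_eq_R_meet_R_general f hf hsemi x
end

section
/- Let (P, ≼, ∧, ∨) be a locally finite lattice with least element 0̂, let f be a semimultiplicative complex-valued function on P with f(x) ≠ 0 for all x ∈ P, set g(x) = 1/f(x), and let S = {x_1, …, x_n} be a finite meet closed subset of P with distinct elements, indexed so that x_i ≼ x_j only if i ≤ j. Assume l_i = ∑_{z ≼ x_i, z ⋠ x_j for all j < i} (g_d * μ)(0̂, z) ≠ 0 for all i ∈ {1, …, n}. Then for every λ ∈ ℂ: there exists a nonzero x ∈ ℂⁿ with (S)_f x = λ [S]_f x if and only if there exists a nonzero y ∈ ℂⁿ with L⁻¹ A y = λ y, where L = diag(l_1, …, l_n), A = (RE)⁻¹ (S)_f (Eᵀ R)⁻¹, R = diag(f(x_1), …, f(x_n)), and E is the n×n matrix with E_{ij} =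 1 if x_j ≼ x_i and E_{ij} = 0 otherwise. -/
/-!
Because `S` is meet closed and its indexing is compatible with `≤`, every `z ≤ x t` has a first
upper bound `x k` in `S`, and this `x k` lies below `x t`. Hence the sets summed over in `l k`
partition the down-set of `x t` as `k` runs over `x k ≤ x t`, and Möbius inversion gives
`∑_{x k ≤ x t} l k = g (x t) = 1 / f (x t)`. Together with `f (a ⊓ b) f (a ⊔ b) = f a f b` this
factors the join matrix as `[S]_f = (R E) L (Eᵀ R)`. Since `E` is unitriangular, the substitution
`y = Eᵀ R v` turns `(S)_f v = λ [S]_f v` into `L⁻¹ A y = λ y`.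
-/

open Matrix Finset

section Moebius

variable {P α : Type*} [PartialOrder P] [LocallyFiniteOrder P] [Ring α] {mu : P → P → α}

theorem sum_Icc_moebius_of_lt (hmu_lt : ∀ p q : P, p < q → mu p q = -∑ r ∈ Ico p q, mu p r)
    {w t : P} (h : w < t) : ∑ z ∈ Icc w t, mu w z = 0 := by
  classical
  rw [← Ico_insert_right h.le, sum_insert right_notMem_Ico, hmu_lt w t h, neg_add_cancel]

theorem sum_Icc_sum_Icc_mul_moebius (hmu_self : ∀ p, mu p p = 1)
    (hmu_lt : ∀ p q : P, p < q → mu p q = -∑ r ∈ Ico p q, mu p r) (g : P → α) {a t : P}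
    (hat : a ≤ t) : ∑ z ∈ Icc a t, ∑ w ∈ Icc a z, g w * mu w z = g t := by
  have hswap : ∑ z ∈ Icc a t, ∑ w ∈ Icc a z, g w * mu w z =
      ∑ w ∈ Icc a t, g w * ∑ z ∈ Icc w t, mu w z := by
    simp_rw [mul_sum]
    refine sum_comm' fun z w => ?_
    simp only [mem_Icc]
    constructor <;> intro h <;> refine ⟨⟨?_, ?_⟩, ?_, ?_⟩ <;> order
  classical
  rw [hswap, ← Ico_insert_right hat, sum_insert right_notMem_Ico, Icc_self, sum_singleton,
    hmu_self, mul_one, add_eq_left]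
  exact sum_eq_zero fun w hw => by rw [sum_Icc_moebius_of_lt hmu_lt (mem_Ico.1 hw).2, mul_zero]

end Moebius

section Fibers

variable {P ι : Type*} [SemilatticeInf P] [OrderBot P] [LocallyFiniteOrder P]
  [DecidableRel ((· ≤ ·) : P → P → Prop)] [Fintype ι] [LinearOrder ι] {x : ι → P}

def firstUpperBoundFiber (x : ι → P) (k : ι) : Finset P :=
  (Icc ⊥ (x k)).filter fun z => ∀ j, j < k → ¬ z ≤ x j

theorem pairwiseDisjoint_firstUpperBoundFiber (x : ι → P) (s : Set ι) :
    s.PairwiseDisjoint (firstUpperBoundFiber x) := by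
  intro a _ b _ hab
  refine disjoint_left.2 fun z hza hzb => ?_
  simp only [firstUpperBoundFiber, mem_filter, mem_Icc] at hza hzb
  rcases hab.lt_or_gt with h | h
  · exact hzb.2 a h hza.1.2
  · exact hza.2 b h hzb.1.2

theorem biUnion_firstUpperBoundFiber [DecidableEq P] (hord : ∀ i j, x i ≤ x j → i ≤ j)
    (hmeet : ∀ i j, ∃ k, x k = x i ⊓ x j) (t : ι) :
    ({k | x k ≤ x t} : Finset ι).biUnion (firstUpperBoundFiber x) = Icc ⊥ (x t) := by
  ext z
  simp only [firstUpperBoundFiber, mem_biUnion, mem_filter, mem_univ, true_and, mem_Icc,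
    bot_le]
  constructor
  · rintro ⟨k, hkt, hzk, -⟩
    exact hzk.trans hkt
  · intro hzt
    obtain ⟨k, hk, hmin⟩ := ({k | z ≤ x k} : Finset ι).exists_min_image id
      ⟨t, by simpa using hzt⟩
    simp only [mem_filter, mem_univ, true_and, id] at hk hmin
    obtain ⟨m, hm⟩ := hmeet k t
    -- `x k ⊓ x t` is some `x m`; minimality of `k` and the ordering of `x` force `m = k`.
    have hmk : m = k :=
      le_antisymm (hord m k (hm ▸ inf_le_left)) (hmin m (hm ▸ le_inf hk hzt))
    exact ⟨k, hmk ▸ hm ▸ inf_le_right, hk, fun j hj hzj => (hmin j hzj).not_gt hj⟩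

theorem sum_sum_firstUpperBoundFiber {β : Type*} [AddCommMonoid β]
    (hord : ∀ i j, x i ≤ x j → i ≤ j) (hmeet : ∀ i j, ∃ k, x k = x i ⊓ x j) (h : P → β)
    (t : ι) :
    ∑ k with x k ≤ x t, ∑ z ∈ firstUpperBoundFiber x k, h z = ∑ z ∈ Icc ⊥ (x t), h z := by
  classical
  rw [← sum_biUnion (pairwiseDisjoint_firstUpperBoundFiber x _),
    biUnion_firstUpperBoundFiber hord hmeet]

theorem sum_le_eq_of_fiberMoebius {α : Type*} [Ring α] {mu : P → P → α}
    (hmu_self : ∀ p, mu p p = 1) (hmu_lt : ∀ p q : P, p < q → mu p q = -∑ r ∈ Ico p q, mu p r)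
    (hord : ∀ i j, x i ≤ x j → i ≤ j) (hmeet : ∀ i j, ∃ k, x k = x i ⊓ x j) (g : P → α)
    {l : ι → α} (hl : ∀ i, l i = ∑ z ∈ firstUpperBoundFiber x i, ∑ w ∈ Icc ⊥ z, g w * mu w z)
    (t : ι) : ∑ k with x k ≤ x t, l k = g (x t) := by
  simp only [hl]
  rw [sum_sum_firstUpperBoundFiber hord hmeet, sum_Icc_sum_Icc_mul_moebius hmu_self hmu_lt g bot_le]

end Fibers

section Matrices

variable {ι 𝕜 : Type*} [Fintype ι] [DecidableEq ι] [Field 𝕜]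

theorem exists_mulVec_eq_smul_mul_mulVec_iff {M B L C : Matrix ι ι 𝕜} (hB : IsUnit B.det)
    (hL : IsUnit L.det) (hC : IsUnit C.det) (lam : 𝕜) :
    (∃ v, v ≠ 0 ∧ M *ᵥ v = lam • (B * L * C) *ᵥ v) ↔
      ∃ y, y ≠ 0 ∧ (L⁻¹ * (B⁻¹ * M * C⁻¹)) *ᵥ y = lam • y := by
  have hCinj : Function.Injective C.mulVec :=
    mulVec_injective_iff_isUnit.2 ((isUnit_iff_isUnit_det C).2 hC)
  have hBLinj : Function.Injective (B * L).mulVec :=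
    mulVec_injective_iff_isUnit.2 ((isUnit_iff_isUnit_det _).2 (by rw [det_mul]; exact hB.mul hL))
  have hnonzero : ∀ v, C *ᵥ v ≠ 0 ↔ v ≠ 0 := fun v => hCinj.ne_iff' (mulVec_zero C)
  have heig : ∀ v, M *ᵥ v = lam • (B * L * C) *ᵥ v ↔
      (L⁻¹ * (B⁻¹ * M * C⁻¹)) *ᵥ (C *ᵥ v) = lam • C *ᵥ v := by
    intro v
    have hcancel : B * L * (L⁻¹ * (B⁻¹ * M * C⁻¹)) * C = M := by
      simp only [Matrix.mul_assoc, mul_nonsing_inv_cancel_left _ _ hL, nonsing_inv_mul _ hC,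
        mul_nonsing_inv_cancel_left _ _ hB, Matrix.mul_one]
    conv_rhs => rw [← hBLinj.eq_iff, mulVec_mulVec, mulVec_smul, mulVec_mulVec, mulVec_mulVec,
      hcancel]
  constructor
  · rintro ⟨v, hv, h⟩
    exact ⟨C *ᵥ v, (hnonzero v).2 hv, (heig v).1 h⟩
  · rintro ⟨y, hy, h⟩
    obtain ⟨v, rfl⟩ := mulVec_surjective_iff_isUnit.2 ((isUnit_iff_isUnit_det C).2 hC) y
    exact ⟨v, (hnonzero v).1 hy, (heig v).2 h⟩

end Matrices

section JoinMatrix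

variable {P ι 𝕜 : Type*} [Fintype ι] [LinearOrder ι] [Field 𝕜]

def zetaMatrix [Preorder P] [DecidableRel ((· ≤ ·) : P → P → Prop)] (x : ι → P) :
    Matrix ι ι 𝕜 :=
  of fun i j => if x j ≤ x i then 1 else 0

theorem det_zetaMatrix [Preorder P] [DecidableRel ((· ≤ ·) : P → P → Prop)] {x : ι → P}
    (hord : ∀ i j, x i ≤ x j → i ≤ j) : (zetaMatrix x : Matrix ι ι 𝕜).det = 1 := by
  have hlower : (zetaMatrix x : Matrix ι ι 𝕜).IsLowerTriangular := fun i j hij =>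
    if_neg fun h => (hord j i h).not_gt hij
  rw [det_of_isLowerTriangular _ hlower]
  exact prod_eq_one fun i _ => if_pos le_rfl

theorem joinMatrix_eq_mul [Lattice P] [DecidableRel ((· ≤ ·) : P → P → Prop)] {x : ι → P}
    (hmeet : ∀ i j, ∃ k, x k = x i ⊓ x j) {f : P → 𝕜} (hf : ∀ p, f p ≠ 0)
    (hsemi : ∀ p q : P, f (p ⊓ q) * f (p ⊔ q) = f p * f q) {l : ι → 𝕜}
    (hl : ∀ t, ∑ k with x k ≤ x t, l k = (f (x t))⁻¹) :
    of (fun i j => f (x i ⊔ x j)) = diagonal (fun i => f (x i)) * zetaMatrix x * diagonal l *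
      ((zetaMatrix x)ᵀ * diagonal (fun i => f (x i))) := by
  ext i j
  obtain ⟨m, hm⟩ := hmeet i j
  have hzeta : ∀ k, (zetaMatrix x i k : 𝕜) * zetaMatrix x j k * l k =
      if x k ≤ x m then l k else 0 := fun k => by
    simp only [zetaMatrix, of_apply, hm, le_inf_iff]
    split_ifs <;> simp_all
  calc f (x i ⊔ x j) = f (x i) * f (x j) * (f (x i ⊓ x j))⁻¹ := by
        rw [← hsemi]; field_simp [hf]
    _ = f (x i) * f (x j) * ∑ k, (zetaMatrix x i k : 𝕜) * zetaMatrix x j k * l k := by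
        rw [← hm, ← hl, sum_filter]; simp only [hzeta]
    _ = _ := by
      rw [mul_apply, mul_sum]
      simp only [mul_diagonal, diagonal_mul, transpose_apply]
      exact sum_congr rfl fun k _ => by ring

end JoinMatrix

theorem generalized_eigenvalues_meet_wrt_join_general
    {P : Type*} [Lattice P] [OrderBot P] [LocallyFiniteOrder P]
    [DecidableRel ((· ≤ ·) : P → P → Prop)]
    (mu : P → P → ℂ)
    (hmu_self : ∀ p, mu p p = 1)
    (hmu_lt : ∀ p q : P, p < q → mu p q = -∑ r ∈ Finset.Ico p q, mu p r)
    (f : P → ℂ) (hf : ∀ p, f p ≠ 0)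
    (hsemi : ∀ p q : P, f (p ⊓ q) * f (p ⊔ q) = f p * f q)
    (g : P → ℂ) (hg : ∀ p, g p = (f p)⁻¹)
    {n : ℕ} (x : Fin n → P)
    (hord : ∀ i j, x i ≤ x j → i ≤ j)
    (hmeet : ∀ i j, ∃ k, x k = x i ⊓ x j)
    (l : Fin n → ℂ)
    (hl : ∀ i, l i = ∑ z ∈ (Finset.Icc ⊥ (x i)).filter
        (fun z => ∀ j, j < i → ¬ z ≤ x j),
      ∑ w ∈ Finset.Icc ⊥ z, g w * mu w z)
    (hl0 : ∀ i, l i ≠ 0)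
    (E : Matrix (Fin n) (Fin n) ℂ)
    (hE : ∀ i j, E i j = if x j ≤ x i then 1 else 0)
    (L R A : Matrix (Fin n) (Fin n) ℂ)
    (hL : L = Matrix.diagonal l)
    (hR : R = Matrix.diagonal (fun i => f (x i)))
    (hA : A = (R * E)⁻¹ * (Matrix.of fun i j => f (x i ⊓ x j)) * (Eᵀ * R)⁻¹) :
    ∀ lam : ℂ,
      (∃ v : Fin n → ℂ, v ≠ 0 ∧
          (Matrix.of fun i j => f (x i ⊓ x j)).mulVec v =
            lam • (Matrix.of fun i j => f (x i ⊔ x j)).mulVec v) ↔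
        (∃ y : Fin n → ℂ, y ≠ 0 ∧ (L⁻¹ * A).mulVec y = lam • y) := by
  intro lam
  obtain rfl : E = zetaMatrix x := Matrix.ext hE
  subst hL hR hA
  have hdiag : ∀ d : Fin n → ℂ, (∀ i, d i ≠ 0) → IsUnit (diagonal d).det := fun d hd => by
    rw [det_diagonal]
    exact isUnit_iff_ne_zero.2 (prod_ne_zero_iff.2 fun i _ => hd i)
  have hRdet := hdiag _ fun i => hf (x i)
  have hEdet : IsUnit (zetaMatrix x : Matrix (Fin n) (Fin n) ℂ).det := by
    rw [det_zetaMatrix hord]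
    exact isUnit_one
  -- `hl` decides its filter predicate with `Fin`-specific instances, hence `convert`.
  have hl' : ∀ i, l i = ∑ z ∈ firstUpperBoundFiber x i, ∑ w ∈ Icc ⊥ z, g w * mu w z :=
    fun i => (hl i).trans (by rw [firstUpperBoundFiber]; convert rfl)
  have hsum : ∀ t, ∑ k with x k ≤ x t, l k = (f (x t))⁻¹ := fun t =>
    (sum_le_eq_of_fiberMoebius hmu_self hmu_lt hord hmeet g hl' t).trans (hg _)
  rw [joinMatrix_eq_mul hmeet hf hsemi hsum]
  exact exists_mulVec_eq_smul_mul_mulVec_iff (by rw [det_mul]; exact hRdet.mul hEdet)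
    (hdiag l hl0) (by rw [det_mul, det_transpose]; exact hEdet.mul hRdet) lam

/-- Under invertibility of the join matrix (encoded by `l i ≠ 0`), the
`[S]_f`-eigenvalues of `(S)_f` are precisely the eigenvalues of `L⁻¹ * A`, where
`L = diag(l)`, `A = (R * E)⁻¹ * (S)_f * (Eᵀ * R)⁻¹`, `R = diag(f ∘ x)` and
`E i j = 1` iff `x j ≼ x i`. -/
theorem generalized_eigenvalues_meet_wrt_join
    {P : Type*} [Lattice P] [OrderBot P] [LocallyFiniteOrder P]
    [DecidableRel ((· ≤ ·) : P → P → Prop)]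
    (mu : P → P → ℂ)
    (hmu_self : ∀ p, mu p p = 1)
    (hmu_lt : ∀ p q : P, p < q → mu p q = -∑ r ∈ Finset.Ico p q, mu p r)
    (hmu_nle : ∀ p q : P, ¬ p ≤ q → mu p q = 0)
    (f : P → ℂ) (hf : ∀ p, f p ≠ 0)
    (hsemi : ∀ p q : P, f (p ⊓ q) * f (p ⊔ q) = f p * f q)
    (g : P → ℂ) (hg : ∀ p, g p = (f p)⁻¹)
    {n : ℕ} (x : Fin n → P) (hinj : Function.Injective x)
    (hord : ∀ i j, x i ≤ x j → i ≤ j)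
    (hmeet : ∀ i j, ∃ k, x k = x i ⊓ x j)
    (l : Fin n → ℂ)
    (hl : ∀ i, l i = ∑ z ∈ (Finset.Icc ⊥ (x i)).filter
        (fun z => ∀ j, j < i → ¬ z ≤ x j),
      ∑ w ∈ Finset.Icc ⊥ z, g w * mu w z)
    (hl0 : ∀ i, l i ≠ 0)
    (E : Matrix (Fin n) (Fin n) ℂ)
    (hE : ∀ i j, E i j = if x j ≤ x i then 1 else 0)
    (L R A : Matrix (Fin n) (Fin n) ℂ)
    (hL : L = Matrix.diagonal l)
    (hR : R = Matrix.diagonal (fun i => f (x i)))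
    (hA : A = (R * E)⁻¹ * (Matrix.of fun i j => f (x i ⊓ x j)) * (Eᵀ * R)⁻¹) :
    ∀ lam : ℂ,
      (∃ v : Fin n → ℂ, v ≠ 0 ∧
          (Matrix.of fun i j => f (x i ⊓ x j)).mulVec v =
            lam • (Matrix.of fun i j => f (x i ⊔ x j)).mulVec v) ↔
        (∃ y : Fin n → ℂ, y ≠ 0 ∧ (L⁻¹ * A).mulVec y = lam • y) :=
  generalized_eigenvalues_meet_wrt_join_general mu hmu_self hmu_lt f hf hsemi g hg x hord hmeet l hl
    hl0 E hE L R A hL hR hA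
end

section
/- Let (P, ≼, ∧, ∨) be a locally finite lattice with least element 0̂, let f be a semimultiplicative complex-valued function on P with f(x) ≠ 0 for all x ∈ P, set g(x) = 1/f(x), and let S = {x_1, …, x_n} be a finite meet closed subset of P with distinct elements, indexed so that x_i ≼ x_j only if i ≤ j. Assume l_i = ∑_{z ≼ x_i, z ⋠ x_j for all j < i} (g_d * μ)(0̂, z) ≠ 0 and d_i = ∑_{z ≼ x_i, z ⋠ x_j for all j < i} (f_d * μ)(0̂, z) ≠ 0 for all i. Then every [S]_f-eigenvalue λ ∈ ℂ of (S)_f satisfies |λ| ≥ (m_f · M_g⁻¹ · C_n⁻¹ · c_n) / (max_{1≤i≤n} |f(x_i)|²), where m_f = min_{1≤i≤n} |d_i| and M_g = max_{1≤i≤n} |l_i|. -/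
open Matrix

/-- `K n` : the set of `n × n` real lower triangular `0,1`-matrices with unit diagonal. -/
def MemKn {n : ℕ} (X : Matrix (Fin n) (Fin n) ℝ) : Prop :=
  (∀ i j, i < j → X i j = 0) ∧ (∀ i j, X i j = 0 ∨ X i j = 1) ∧ (∀ i, X i i = 1)

/-- The smallest eigenvalue of the (Hermitian) matrix `X * Xᴴ`. -/
noncomputable def gramMinEig {n : ℕ} (X : Matrix (Fin n) (Fin n) ℝ) : ℝ :=
  ⨅ i, (Matrix.isHermitian_mul_conjTranspose_self X).eigenvalues i

/-- The largest eigenvalue of the (Hermitian) matrix `X * Xᴴ`. -/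
noncomputable def gramMaxEig {n : ℕ} (X : Matrix (Fin n) (Fin n) ℝ) : ℝ :=
  ⨆ i, (Matrix.isHermitian_mul_conjTranspose_self X).eigenvalues i

/-- `c n` : the minimum over `X ∈ K n` of the smallest eigenvalue of `X Xᵀ`. -/
noncomputable def cKn (n : ℕ) : ℝ :=
  ⨅ X : {X : Matrix (Fin n) (Fin n) ℝ // MemKn X}, gramMinEig X.1

/-- `C n` : the maximum over `X ∈ K n` of the largest eigenvalue of `X Xᵀ`. -/
noncomputable def CKn (n : ℕ) : ℝ :=
  ⨆ X : {X : Matrix (Fin n) (Fin n) ℝ // MemKn X}, gramMaxEig X.1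

/-!
Let `E` be the incidence matrix of `S` (`E i k = 1` iff `x k ≤ x i`), which lies in `K(n)`.
Möbius inversion over the meet closed set `S` factors the meet matrix as `E * diag d * Eᵀ`, and
semimultiplicativity turns the join matrix into `Δ * (E * diag l * Eᵀ) * Δ` with
`Δ = diag (f (x i))`. Since `E Eᵀ` and `Eᵀ E` have the same eigenvalues, the Rayleigh bounds give
`‖(S)_f v‖² ≥ (c_n m_f)² ‖v‖²` and `‖[S]_f v‖² ≤ (max |f (x i)|² C_n M_g)² ‖v‖²`, and comparing
norms in `(S)_f v = λ [S]_f v` bounds `|λ|` from below.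
-/

namespace Matrix.IsHermitian

variable {ι : Type*} [Fintype ι] [DecidableEq ι] {A : Matrix ι ι ℝ}

theorem mul_dotProduct_le_dotProduct_mulVec (hA : A.IsHermitian) {m : ℝ}
    (hm : ∀ i, m ≤ hA.eigenvalues i) (u : ι → ℝ) : m * (u ⬝ᵥ u) ≤ u ⬝ᵥ A *ᵥ u := by
  have hpsd : (A - algebraMap ℝ _ m).PosSemidef := by
    refine posSemidef_iff_isHermitian_and_spectrum_nonneg.mpr
      ⟨hA.sub (isHermitian_diagonal _), ?_⟩
    rw [← spectrum.sub_singleton_eq, hA.spectrum_real_eq_range_eigenvalues]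
    rintro _ ⟨_, ⟨i, rfl⟩, _, rfl, rfl⟩
    exact sub_nonneg.mpr (hm i)
  have := hpsd.dotProduct_mulVec_nonneg u
  rw [sub_mulVec, dotProduct_sub, algebraMap_eq_diagonal] at this
  simpa [Pi.algebraMap_def, dotProduct_smul, mulVec_diagonal] using this

theorem dotProduct_mulVec_le_mul_dotProduct (hA : A.IsHermitian) {M : ℝ}
    (hM : ∀ i, hA.eigenvalues i ≤ M) (u : ι → ℝ) : u ⬝ᵥ A *ᵥ u ≤ M * (u ⬝ᵥ u) := by
  have hpsd : (algebraMap ℝ _ M - A).PosSemidef := by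
    refine posSemidef_iff_isHermitian_and_spectrum_nonneg.mpr
      ⟨(isHermitian_diagonal _).sub hA, ?_⟩
    rw [← spectrum.singleton_sub_eq, hA.spectrum_real_eq_range_eigenvalues]
    rintro _ ⟨_, rfl, _, ⟨i, rfl⟩, rfl⟩
    exact sub_nonneg.mpr (hM i)
  have := hpsd.dotProduct_mulVec_nonneg u
  rw [sub_mulVec, dotProduct_sub, algebraMap_eq_diagonal] at this
  simpa [Pi.algebraMap_def, dotProduct_smul, mulVec_diagonal] using this

end Matrix.IsHermitian

section Gram

variable {n : ℕ}

theorem dotProduct_mul_conjTranspose_mulVec (X : Matrix (Fin n) (Fin n) ℝ) (u : Fin n → ℝ) :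
    u ⬝ᵥ (X * Xᴴ) *ᵥ u = (Xᵀ *ᵥ u) ⬝ᵥ (Xᵀ *ᵥ u) := by
  rw [conjTranspose_eq_transpose_of_trivial, ← mulVec_mulVec, dotProduct_mulVec,
    ← mulVec_transpose]

theorem gramMinEig_mul_le_dotProduct (X : Matrix (Fin n) (Fin n) ℝ) (u : Fin n → ℝ) :
    gramMinEig X * (u ⬝ᵥ u) ≤ (Xᵀ *ᵥ u) ⬝ᵥ (Xᵀ *ᵥ u) :=
  dotProduct_mul_conjTranspose_mulVec X u ▸
    (isHermitian_mul_conjTranspose_self X).mul_dotProduct_le_dotProduct_mulVec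
      (fun i => ciInf_le (Set.finite_range _).bddBelow i) u

theorem dotProduct_le_gramMaxEig_mul (X : Matrix (Fin n) (Fin n) ℝ) (u : Fin n → ℝ) :
    (Xᵀ *ᵥ u) ⬝ᵥ (Xᵀ *ᵥ u) ≤ gramMaxEig X * (u ⬝ᵥ u) :=
  dotProduct_mul_conjTranspose_mulVec X u ▸
    (isHermitian_mul_conjTranspose_self X).dotProduct_mulVec_le_mul_dotProduct
      (fun i => le_ciSup (Set.finite_range _).bddAbove i) u

theorem eigenvalues_mul_conjTranspose_self_transpose (X : Matrix (Fin n) (Fin n) ℝ) :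
    (isHermitian_mul_conjTranspose_self Xᵀ).eigenvalues =
      (isHermitian_mul_conjTranspose_self X).eigenvalues := by
  rw [IsHermitian.eigenvalues_eq_eigenvalues_iff, conjTranspose_eq_transpose_of_trivial,
    conjTranspose_eq_transpose_of_trivial, transpose_transpose, charpoly_mul_comm]

theorem gramMinEig_transpose (X : Matrix (Fin n) (Fin n) ℝ) :
    gramMinEig Xᵀ = gramMinEig X := by
  rw [gramMinEig, gramMinEig, eigenvalues_mul_conjTranspose_self_transpose]

theorem gramMaxEig_transpose (X : Matrix (Fin n) (Fin n) ℝ) :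
    gramMaxEig Xᵀ = gramMaxEig X := by
  rw [gramMaxEig, gramMaxEig, eigenvalues_mul_conjTranspose_self_transpose]

theorem gramMinEig_nonneg (X : Matrix (Fin n) (Fin n) ℝ) : 0 ≤ gramMinEig X :=
  Real.iInf_nonneg (eigenvalues_self_mul_conjTranspose_nonneg X)

theorem gramMaxEig_nonneg (X : Matrix (Fin n) (Fin n) ℝ) : 0 ≤ gramMaxEig X :=
  Real.iSup_nonneg (eigenvalues_self_mul_conjTranspose_nonneg X)

instance finite_memKn : Finite {X : Matrix (Fin n) (Fin n) ℝ // MemKn X} := by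
  refine Finite.of_injective (fun X i j => X.1 i j = 1) fun X Y hXY => ?_
  ext i j
  have hij := congrFun (congrFun hXY i) j
  rcases X.2.2.1 i j with hX | hX <;> rcases Y.2.2.1 i j with hY | hY <;> simp_all

theorem cKn_nonneg : 0 ≤ cKn n :=
  Real.iInf_nonneg fun X => gramMinEig_nonneg X.1

theorem CKn_nonneg : 0 ≤ CKn n :=
  Real.iSup_nonneg fun X => gramMaxEig_nonneg X.1

theorem cKn_le_gramMinEig {X : Matrix (Fin n) (Fin n) ℝ} (hX : MemKn X) :
    cKn n ≤ gramMinEig X :=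
  ciInf_le (f := fun Y : {X // MemKn X} => gramMinEig Y.1) (Set.finite_range _).bddBelow ⟨X, hX⟩

theorem gramMaxEig_le_CKn {X : Matrix (Fin n) (Fin n) ℝ} (hX : MemKn X) :
    gramMaxEig X ≤ CKn n :=
  le_ciSup (f := fun Y : {X // MemKn X} => gramMaxEig Y.1) (Set.finite_range _).bddAbove ⟨X, hX⟩

end Gram

noncomputable def sqNorm {ι : Type*} [Fintype ι] (v : ι → ℂ) : ℝ := ∑ i, Complex.normSq (v i)

section sqNorm

variable {ι : Type*} [Fintype ι]

theorem sqNorm_pos {v : ι → ℂ} (hv : v ≠ 0) : 0 < sqNorm v := by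
  obtain ⟨i, hi⟩ := Function.ne_iff.mp hv
  exact Finset.sum_pos' (fun j _ => Complex.normSq_nonneg _)
    ⟨i, Finset.mem_univ i, Complex.normSq_pos.mpr hi⟩

theorem sqNorm_smul (a : ℂ) (v : ι → ℂ) : sqNorm (a • v) = ‖a‖ ^ 2 * sqNorm v := by
  simp only [sqNorm, Finset.mul_sum, Pi.smul_apply, smul_eq_mul, Complex.normSq_eq_norm_sq,
    norm_mul, mul_pow]

theorem sqNorm_eq_dotProduct_re_add_im (v : ι → ℂ) :
    sqNorm v = (fun i => (v i).re) ⬝ᵥ (fun i => (v i).re) +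
      (fun i => (v i).im) ⬝ᵥ (fun i => (v i).im) := by
  simp only [sqNorm, dotProduct, ← Finset.sum_add_distrib, Complex.normSq_apply]

theorem sqNorm_map_ofReal_mulVec (Y : Matrix ι ι ℝ) (v : ι → ℂ) :
    sqNorm (Y.map (↑) *ᵥ v) =
      (Y *ᵥ fun i => (v i).re) ⬝ᵥ (Y *ᵥ fun i => (v i).re) +
        (Y *ᵥ fun i => (v i).im) ⬝ᵥ (Y *ᵥ fun i => (v i).im) := by
  rw [sqNorm_eq_dotProduct_re_add_im]
  congr <;> ext i <;> simp [mulVec, dotProduct, Complex.re_sum, Complex.im_sum]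

theorem mul_sqNorm_le_sqNorm_map_ofReal_mulVec {Y : Matrix ι ι ℝ} {c : ℝ}
    (h : ∀ u, c * (u ⬝ᵥ u) ≤ (Y *ᵥ u) ⬝ᵥ (Y *ᵥ u)) (v : ι → ℂ) :
    c * sqNorm v ≤ sqNorm (Y.map (↑) *ᵥ v) := by
  rw [sqNorm_map_ofReal_mulVec, sqNorm_eq_dotProduct_re_add_im, mul_add]
  exact add_le_add (h _) (h _)

theorem sqNorm_map_ofReal_mulVec_le_mul {Y : Matrix ι ι ℝ} {C : ℝ}
    (h : ∀ u, (Y *ᵥ u) ⬝ᵥ (Y *ᵥ u) ≤ C * (u ⬝ᵥ u)) (v : ι → ℂ) :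
    sqNorm (Y.map (↑) *ᵥ v) ≤ C * sqNorm v := by
  rw [sqNorm_map_ofReal_mulVec, sqNorm_eq_dotProduct_re_add_im, mul_add]
  exact add_le_add (h _) (h _)

theorem div_le_norm_of_mulVec_eq_smul_mulVec {A B : Matrix ι ι ℂ} {lam : ℂ} {v : ι → ℂ}
    (hv : v ≠ 0) (heig : A *ᵥ v = lam • B *ᵥ v) {α β : ℝ} (hα : 0 ≤ α) (hβ : 0 ≤ β)
    (hA : α ^ 2 * sqNorm v ≤ sqNorm (A *ᵥ v)) (hB : sqNorm (B *ᵥ v) ≤ β ^ 2 * sqNorm v) :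
    α / β ≤ ‖lam‖ := by
  have hsq : α ^ 2 * sqNorm v ≤ (‖lam‖ * β) ^ 2 * sqNorm v :=
    calc α ^ 2 * sqNorm v ≤ ‖lam‖ ^ 2 * sqNorm (B *ᵥ v) := by rwa [← sqNorm_smul, ← heig]
      _ ≤ (‖lam‖ * β) ^ 2 * sqNorm v := by rw [mul_pow, mul_assoc]; gcongr
  have hle := (pow_le_pow_iff_left₀ hα (by positivity) two_ne_zero).mp
    (le_of_mul_le_mul_right hsq (sqNorm_pos hv))
  exact div_le_of_le_mul₀ hβ (norm_nonneg _) hle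

variable [DecidableEq ι] {c : ι → ℂ}

theorem sq_mul_sqNorm_le_sqNorm_diagonal_mulVec {m : ℝ} (hm₀ : 0 ≤ m) (hm : ∀ i, m ≤ ‖c i‖)
    (v : ι → ℂ) : m ^ 2 * sqNorm v ≤ sqNorm (diagonal c *ᵥ v) := by
  simp only [sqNorm, Finset.mul_sum, mulVec_diagonal, Complex.normSq_eq_norm_sq,
    norm_mul, mul_pow]
  gcongr with i
  exact hm i

theorem sqNorm_diagonal_mulVec_le_sq_mul {M : ℝ} (hM : ∀ i, ‖c i‖ ≤ M) (v : ι → ℂ) :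
    sqNorm (diagonal c *ᵥ v) ≤ M ^ 2 * sqNorm v := by
  simp only [sqNorm, Finset.mul_sum, mulVec_diagonal, Complex.normSq_eq_norm_sq,
    norm_mul, mul_pow]
  gcongr with i
  exact hM i

end sqNorm

section KnBounds

variable {n : ℕ} {X : Matrix (Fin n) (Fin n) ℝ}

theorem cKn_mul_sqNorm_le_sqNorm_mulVec (hX : MemKn X) (v : Fin n → ℂ) :
    cKn n * sqNorm v ≤ sqNorm (X.map (↑) *ᵥ v) :=
  mul_sqNorm_le_sqNorm_map_ofReal_mulVec (fun u => by
    have h := gramMinEig_mul_le_dotProduct Xᵀ u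
    rw [gramMinEig_transpose, transpose_transpose] at h
    exact (mul_le_mul_of_nonneg_right (cKn_le_gramMinEig hX)
      (dotProduct_self_star_nonneg u)).trans h) v

theorem sqNorm_mulVec_le_CKn_mul (hX : MemKn X) (v : Fin n → ℂ) :
    sqNorm (X.map (↑) *ᵥ v) ≤ CKn n * sqNorm v :=
  sqNorm_map_ofReal_mulVec_le_mul (fun u => by
    have h := dotProduct_le_gramMaxEig_mul Xᵀ u
    rw [gramMaxEig_transpose, transpose_transpose] at h
    exact h.trans (mul_le_mul_of_nonneg_right (gramMaxEig_le_CKn hX)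
      (dotProduct_self_star_nonneg u))) v

theorem cKn_mul_sqNorm_le_sqNorm_transpose_mulVec (hX : MemKn X) (v : Fin n → ℂ) :
    cKn n * sqNorm v ≤ sqNorm ((X.map (↑))ᵀ *ᵥ v) := by
  rw [← transpose_map]
  exact mul_sqNorm_le_sqNorm_map_ofReal_mulVec (fun u =>
    (mul_le_mul_of_nonneg_right (cKn_le_gramMinEig hX) (dotProduct_self_star_nonneg u)).trans
        (gramMinEig_mul_le_dotProduct X u)) v

theorem sqNorm_transpose_mulVec_le_CKn_mul (hX : MemKn X) (v : Fin n → ℂ) :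
    sqNorm ((X.map (↑))ᵀ *ᵥ v) ≤ CKn n * sqNorm v := by
  rw [← transpose_map]
  exact sqNorm_map_ofReal_mulVec_le_mul (fun u => (dotProduct_le_gramMaxEig_mul X u).trans
      (mul_le_mul_of_nonneg_right (gramMaxEig_le_CKn hX) (dotProduct_self_star_nonneg u))) v

theorem sq_mul_sqNorm_le_sqNorm_mul_diagonal_mul_transpose_mulVec (hX : MemKn X)
    {d : Fin n → ℂ} {m : ℝ} (hm₀ : 0 ≤ m) (hm : ∀ i, m ≤ ‖d i‖) (v : Fin n → ℂ) :
    (cKn n * m) ^ 2 * sqNorm v ≤ sqNorm ((X.map (↑) * diagonal d * (X.map (↑))ᵀ) *ᵥ v) := by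
  rw [← mulVec_mulVec, ← mulVec_mulVec]
  calc (cKn n * m) ^ 2 * sqNorm v = cKn n * (m ^ 2 * (cKn n * sqNorm v)) := by ring
    _ ≤ cKn n * (m ^ 2 * sqNorm ((X.map (↑))ᵀ *ᵥ v)) := by
      gcongr
      · exact cKn_nonneg
      · exact cKn_mul_sqNorm_le_sqNorm_transpose_mulVec hX v
    _ ≤ cKn n * sqNorm (diagonal d *ᵥ (X.map (↑))ᵀ *ᵥ v) := by
      gcongr
      · exact cKn_nonneg
      · exact sq_mul_sqNorm_le_sqNorm_diagonal_mulVec hm₀ hm _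
    _ ≤ sqNorm (X.map (↑) *ᵥ diagonal d *ᵥ (X.map (↑))ᵀ *ᵥ v) :=
      cKn_mul_sqNorm_le_sqNorm_mulVec hX _

theorem sqNorm_mul_diagonal_mul_transpose_mulVec_le_sq_mul (hX : MemKn X)
    {d : Fin n → ℂ} {M : ℝ} (hM : ∀ i, ‖d i‖ ≤ M) (v : Fin n → ℂ) :
    sqNorm ((X.map (↑) * diagonal d * (X.map (↑))ᵀ) *ᵥ v) ≤ (CKn n * M) ^ 2 * sqNorm v := by
  rw [← mulVec_mulVec, ← mulVec_mulVec]
  calc sqNorm (X.map (↑) *ᵥ diagonal d *ᵥ (X.map (↑))ᵀ *ᵥ v)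
      ≤ CKn n * sqNorm (diagonal d *ᵥ (X.map (↑))ᵀ *ᵥ v) := sqNorm_mulVec_le_CKn_mul hX _
    _ ≤ CKn n * (M ^ 2 * sqNorm ((X.map (↑))ᵀ *ᵥ v)) := by
      gcongr
      · exact CKn_nonneg
      · exact sqNorm_diagonal_mulVec_le_sq_mul hM _
    _ ≤ CKn n * (M ^ 2 * (CKn n * sqNorm v)) := by
      gcongr
      · exact CKn_nonneg
      · exact sqNorm_transpose_mulVec_le_CKn_mul hX v
    _ = (CKn n * M) ^ 2 * sqNorm v := by ring

end KnBounds

def SatisfiesMoebiusRecursion {P R : Type*} [Preorder P] [LocallyFiniteOrder P] [Ring R]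
    (mu : P → P → R) : Prop :=
  (∀ p, mu p p = 1) ∧ ∀ p q, p < q → mu p q = -∑ r ∈ Finset.Ico p q, mu p r

namespace SatisfiesMoebiusRecursion

variable {P R : Type*} [PartialOrder P] [LocallyFiniteOrder P] [Ring R] {mu : P → P → R}

theorem sum_Icc [DecidableEq P] (hmu : SatisfiesMoebiusRecursion mu) {w y : P} (hwy : w ≤ y) :
    ∑ z ∈ Finset.Icc w y, mu w z = if w = y then 1 else 0 := by
  rcases hwy.eq_or_lt with rfl | hlt
  · simp [hmu.1]
  · rw [if_neg hlt.ne, ← Finset.Ico_insert_right hwy, Finset.sum_insert Finset.right_notMem_Ico,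
      hmu.2 w y hlt, neg_add_cancel]

theorem sum_Icc_bot_sum_mul [OrderBot P] (hmu : SatisfiesMoebiusRecursion mu) (h : P → R)
    (y : P) : ∑ z ∈ Finset.Icc ⊥ y, ∑ w ∈ Finset.Icc ⊥ z, h w * mu w z = h y := by
  classical
  rw [Finset.sum_comm' (t' := Finset.Icc ⊥ y) (s' := fun w => Finset.Icc w y)
    (fun z w => by simp only [Finset.mem_Icc]; grind)]
  rw [Finset.sum_congr rfl fun w hw => by
    rw [← Finset.mul_sum, hmu.sum_Icc (Finset.mem_Icc.mp hw).2, mul_ite, mul_one, mul_zero]]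
  simp

end SatisfiesMoebiusRecursion

section Preorder

variable {P : Type*} [Preorder P] [DecidableRel ((· ≤ ·) : P → P → Prop)] {n : ℕ}
  {x : Fin n → P}

def newBelow [OrderBot P] [LocallyFiniteOrder P] (x : Fin n → P) (k : Fin n) : Finset P :=
  (Finset.Icc ⊥ (x k)).filter (fun z => ∀ j, j < k → ¬ z ≤ x j)

theorem pairwiseDisjoint_newBelow [OrderBot P] [LocallyFiniteOrder P] (s : Set (Fin n)) :
    s.PairwiseDisjoint (newBelow x) := by
  intro a _ b _ hab
  refine Finset.disjoint_left.mpr fun z hza hzb => ?_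
  simp only [newBelow, Finset.mem_filter, Finset.mem_Icc] at hza hzb
  rcases hab.lt_or_gt with h | h
  exacts [hzb.2 a h hza.1.2, hza.2 b h hzb.1.2]

def incidenceMatrix (R : Type*) [Zero R] [One R] (x : Fin n → P) : Matrix (Fin n) (Fin n) R :=
  of fun i k => if x k ≤ x i then 1 else 0

theorem memKn_incidenceMatrix (hord : ∀ i j, x i ≤ x j → i ≤ j) :
    MemKn (incidenceMatrix ℝ x) := by
  refine ⟨fun i j hij => ?_, fun i j => ?_, fun i => by simp [incidenceMatrix]⟩
  · exact if_neg fun h => (hord j i h).not_gt hij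
  · by_cases h : x j ≤ x i <;> simp [incidenceMatrix, h]

theorem incidenceMatrix_map_ofReal :
    (incidenceMatrix ℝ x).map (↑) = incidenceMatrix ℂ x := by
  ext i j
  simp [incidenceMatrix, apply_ite]

end Preorder

section MeetClosed

variable {P : Type*} [Lattice P] [OrderBot P] [LocallyFiniteOrder P]
  [DecidableRel ((· ≤ ·) : P → P → Prop)] {n : ℕ} {x : Fin n → P}

theorem biUnion_newBelow [DecidableEq P] (hord : ∀ i j, x i ≤ x j → i ≤ j)
    (hmeet : ∀ i j, ∃ k, x k = x i ⊓ x j) (m : Fin n) :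
    (Finset.univ.filter (x · ≤ x m)).biUnion (newBelow x) = Finset.Icc ⊥ (x m) := by
  ext z
  simp only [newBelow, Finset.mem_biUnion, Finset.mem_filter, Finset.mem_univ, true_and,
    Finset.mem_Icc, bot_le]
  refine ⟨fun ⟨k, hkm, hzk, _⟩ => hzk.trans hkm, fun hzm => ?_⟩
  -- the least `k` with `z ≤ x k` works, because `x k ⊓ x m` is some `x k'` with `k' ≤ k`
  obtain ⟨k, hk, hmin⟩ := Finset.exists_min_image (Finset.univ.filter (z ≤ x ·)) id
    ⟨m, Finset.mem_filter.mpr ⟨Finset.mem_univ _, hzm⟩⟩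
  simp only [Finset.mem_filter, Finset.mem_univ, true_and, id] at hk hmin
  obtain ⟨k', hk'⟩ := hmeet k m
  have hk'k : k' = k :=
    le_antisymm (hord _ _ (hk' ▸ inf_le_left)) (hmin k' (hk' ▸ le_inf hk hzm))
  exact ⟨k, hk'k ▸ hk' ▸ inf_le_right, hk, fun j hj hzj => (hmin j hzj).not_gt hj⟩

theorem sum_Icc_bot_eq_sum_sum_newBelow {M : Type*} [AddCommMonoid M]
    (hord : ∀ i j, x i ≤ x j → i ≤ j) (hmeet : ∀ i j, ∃ k, x k = x i ⊓ x j)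
    (G : P → M) (m : Fin n) :
    ∑ z ∈ Finset.Icc ⊥ (x m), G z = ∑ k with x k ≤ x m, ∑ z ∈ newBelow x k, G z := by
  classical
  rw [← biUnion_newBelow hord hmeet m, Finset.sum_biUnion (pairwiseDisjoint_newBelow _)]

theorem of_inf_eq_incidenceMatrix_mul_diagonal_mul_transpose {R : Type*} [CommRing R]
    {mu : P → P → R} (hmu : SatisfiesMoebiusRecursion mu)
    (hord : ∀ i j, x i ≤ x j → i ≤ j) (hmeet : ∀ i j, ∃ k, x k = x i ⊓ x j)
    (h : P → R) {c : Fin n → R}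
    (hc : ∀ k, c k = ∑ z ∈ newBelow x k, ∑ w ∈ Finset.Icc ⊥ z, h w * mu w z) :
    of (fun i j => h (x i ⊓ x j)) =
      incidenceMatrix R x * diagonal c * (incidenceMatrix R x)ᵀ := by
  ext i j
  obtain ⟨m, hm⟩ := hmeet i j
  rw [of_apply, mul_apply]
  simp only [mul_diagonal, transpose_apply, incidenceMatrix, of_apply, ite_mul, one_mul,
    zero_mul, mul_ite, mul_one, mul_zero]
  rw [← hm, ← hmu.sum_Icc_bot_sum_mul h, sum_Icc_bot_eq_sum_sum_newBelow hord hmeet,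
    Finset.sum_filter]
  refine Finset.sum_congr rfl fun k _ => ?_
  simp only [hm, le_inf_iff, ← hc]
  split_ifs <;> tauto

end MeetClosed

theorem of_sup_eq_diagonal_mul_of_inf_mul_diagonal {P K ι : Type*} [Lattice P] [Field K]
    [Fintype ι] [DecidableEq ι] {f g : P → K} (hf : ∀ p, f p ≠ 0)
    (hsemi : ∀ p q : P, f (p ⊓ q) * f (p ⊔ q) = f p * f q) (hg : ∀ p, g p = (f p)⁻¹)
    (x : ι → P) :
    of (fun i j => f (x i ⊔ x j)) =
      diagonal (fun i => f (x i)) * of (fun i j => g (x i ⊓ x j)) * diagonal (fun i => f (x i)) := by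
  ext i j
  rw [mul_diagonal, diagonal_mul, of_apply, of_apply, hg, mul_right_comm, ← hsemi,
    mul_comm (f _), mul_inv_cancel_right₀ (hf _)]

theorem sqNorm_diagonal_mul_mul_diagonal_mulVec_le {ι : Type*} [Fintype ι] [DecidableEq ι]
    {a : ι → ℂ} {F : ℝ} (hF : ∀ i, ‖a i‖ ≤ F) {G : Matrix ι ι ℂ} {K : ℝ}
    (hG : ∀ w, sqNorm (G *ᵥ w) ≤ K ^ 2 * sqNorm w) (v : ι → ℂ) :
    sqNorm ((diagonal a * G * diagonal a) *ᵥ v) ≤ (F ^ 2 * K) ^ 2 * sqNorm v := by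
  rw [← mulVec_mulVec, ← mulVec_mulVec]
  calc sqNorm (diagonal a *ᵥ G *ᵥ diagonal a *ᵥ v)
      ≤ F ^ 2 * sqNorm (G *ᵥ diagonal a *ᵥ v) := sqNorm_diagonal_mulVec_le_sq_mul hF _
    _ ≤ F ^ 2 * (K ^ 2 * (F ^ 2 * sqNorm v)) := by
      gcongr
      exact (hG _).trans (by gcongr; exact sqNorm_diagonal_mulVec_le_sq_mul hF v)
    _ = (F ^ 2 * K) ^ 2 * sqNorm v := by ring

theorem global_lower_bound_meet_wrt_join_general
    {P : Type*} [Lattice P] [OrderBot P] [LocallyFiniteOrder P]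
    [DecidableRel ((· ≤ ·) : P → P → Prop)]
    (mu : P → P → ℂ)
    (hmu_self : ∀ p, mu p p = 1)
    (hmu_lt : ∀ p q : P, p < q → mu p q = -∑ r ∈ Finset.Ico p q, mu p r)
    (f : P → ℂ) (hf : ∀ p, f p ≠ 0)
    (hsemi : ∀ p q : P, f (p ⊓ q) * f (p ⊔ q) = f p * f q)
    (g : P → ℂ) (hg : ∀ p, g p = (f p)⁻¹)
    {n : ℕ}
    (x : Fin n → P)
    (hord : ∀ i j, x i ≤ x j → i ≤ j)
    (hmeet : ∀ i j, ∃ k, x k = x i ⊓ x j)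
    (l : Fin n → ℂ)
    (hl : ∀ i, l i = ∑ z ∈ (Finset.Icc ⊥ (x i)).filter
        (fun z => ∀ j, j < i → ¬ z ≤ x j),
      ∑ w ∈ Finset.Icc ⊥ z, g w * mu w z)
    (d : Fin n → ℂ)
    (hd : ∀ i, d i = ∑ z ∈ (Finset.Icc ⊥ (x i)).filter
        (fun z => ∀ j, j < i → ¬ z ≤ x j),
      ∑ w ∈ Finset.Icc ⊥ z, f w * mu w z)
    (lam : ℂ) (v : Fin n → ℂ) (hv : v ≠ 0)
    (heig : (Matrix.of fun i j => f (x i ⊓ x j)).mulVec v =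
      lam • (Matrix.of fun i j => f (x i ⊔ x j)).mulVec v) :
    ‖lam‖ ≥
      ((⨅ i, ‖d i‖) * (⨆ i, ‖l i‖)⁻¹ * (CKn n)⁻¹ * cKn n) /
        (⨆ i, ‖f (x i)‖) ^ 2 := by
  have hmu : SatisfiesMoebiusRecursion mu := ⟨hmu_self, hmu_lt⟩
  have hX := memKn_incidenceMatrix hord
  have hA := of_inf_eq_incidenceMatrix_mul_diagonal_mul_transpose hmu hord hmeet f hd
  have hB := of_sup_eq_diagonal_mul_of_inf_mul_diagonal hf hsemi hg x
  rw [of_inf_eq_incidenceMatrix_mul_diagonal_mul_transpose hmu hord hmeet g hl] at hB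
  rw [← incidenceMatrix_map_ofReal] at hA hB
  set m := ⨅ i, ‖d i‖
  set M := ⨆ i, ‖l i‖
  set F := ⨆ i, ‖f (x i)‖
  have hm₀ : 0 ≤ m := Real.iInf_nonneg fun i => norm_nonneg _
  have hM₀ : 0 ≤ M := Real.iSup_nonneg fun i => norm_nonneg _
  rw [ge_iff_le, show m * M⁻¹ * (CKn n)⁻¹ * cKn n / F ^ 2 = cKn n * m / (F ^ 2 * (CKn n * M)) by
    field_simp]
  refine div_le_norm_of_mulVec_eq_smul_mulVec hv heig (mul_nonneg cKn_nonneg hm₀)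
    (mul_nonneg (sq_nonneg F) (mul_nonneg CKn_nonneg hM₀)) ?_ ?_
  · rw [hA]
    exact sq_mul_sqNorm_le_sqNorm_mul_diagonal_mul_transpose_mulVec hX hm₀
      (ciInf_le (Set.finite_range _).bddBelow) v
  · rw [hB]
    exact sqNorm_diagonal_mul_mul_diagonal_mulVec_le (le_ciSup (Set.finite_range _).bddAbove)
      (sqNorm_mul_diagonal_mul_transpose_mulVec_le_sq_mul hX
        (le_ciSup (Set.finite_range _).bddAbove)) v

/-- **global lower bound.** If in addition each `d i ≠ 0`, every
`[S]_f`-eigenvalue `λ` of `(S)_f` satisfies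
`|λ| ≥ m_f M_g⁻¹ C_n⁻¹ c_n / (max_i |f (x i)|)²`. -/
theorem global_lower_bound_meet_wrt_join
    {P : Type*} [Lattice P] [OrderBot P] [LocallyFiniteOrder P]
    [DecidableRel ((· ≤ ·) : P → P → Prop)]
    (mu : P → P → ℂ)
    (hmu_self : ∀ p, mu p p = 1)
    (hmu_lt : ∀ p q : P, p < q → mu p q = -∑ r ∈ Finset.Ico p q, mu p r)
    (hmu_nle : ∀ p q : P, ¬ p ≤ q → mu p q = 0)
    (f : P → ℂ) (hf : ∀ p, f p ≠ 0)
    (hsemi : ∀ p q : P, f (p ⊓ q) * f (p ⊔ q) = f p * f q)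
    (g : P → ℂ) (hg : ∀ p, g p = (f p)⁻¹)
    {n : ℕ} (hn : 0 < n)
    (x : Fin n → P) (hinj : Function.Injective x)
    (hord : ∀ i j, x i ≤ x j → i ≤ j)
    (hmeet : ∀ i j, ∃ k, x k = x i ⊓ x j)
    (l : Fin n → ℂ)
    (hl : ∀ i, l i = ∑ z ∈ (Finset.Icc ⊥ (x i)).filter
        (fun z => ∀ j, j < i → ¬ z ≤ x j),
      ∑ w ∈ Finset.Icc ⊥ z, g w * mu w z)
    (hl0 : ∀ i, l i ≠ 0)
    (d : Fin n → ℂ)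
    (hd : ∀ i, d i = ∑ z ∈ (Finset.Icc ⊥ (x i)).filter
        (fun z => ∀ j, j < i → ¬ z ≤ x j),
      ∑ w ∈ Finset.Icc ⊥ z, f w * mu w z)
    (hd0 : ∀ i, d i ≠ 0)
    (lam : ℂ) (v : Fin n → ℂ) (hv : v ≠ 0)
    (heig : (Matrix.of fun i j => f (x i ⊓ x j)).mulVec v =
      lam • (Matrix.of fun i j => f (x i ⊔ x j)).mulVec v) :
    ‖lam‖ ≥
      ((⨅ i, ‖d i‖) * (⨆ i, ‖l i‖)⁻¹ * (CKn n)⁻¹ * cKn n) /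
        (⨆ i, ‖f (x i)‖) ^ 2 :=
  global_lower_bound_meet_wrt_join_general mu hmu_self hmu_lt f hf hsemi g hg x hord hmeet l hl d hd
    lam v hv heig
end

section
/- Let (P, ≼, ∧, ∨) be a locally finite lattice with least element 0̂, let f be a semimultiplicative complex-valued function on P with f(x) ≠ 0 for all x ∈ P, set g(x) = 1/f(x), and let S = {x_1, …, x_n} be a finite lower closed subset of P with distinct elements, indexed so that x_i ≼ x_j only if i ≤ j. Assume l_i = ∑_{z ≼ x_i, z ⋠ x_j for all j < i} (g_d * μ)(0̂, z) ≠ 0 for all i. Then for all i, j ∈ {1, …, n}, (L⁻¹ A)_{ij} = l_i⁻¹ ∑_{α=1}^n ∑_{β=1}^n μ(x_α, x_i) μ(x_β, x_j) / f(x_α ∨ x_β), where L = diag(l_1, …, l_n), A = (RE)⁻¹ (S)_f (Eᵀ R)⁻¹, R = diag(f(x_1), …, f(x_n)), and E is the n×n matrix with E_{ij} = 1 if x_j ≼ x_i and 0 otherwise. -/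
/-!
Write `Z` for the zeta matrix `(x_i ≼ x_j)` of `S` and `M` for its Möbius matrix `(μ(x_i, x_j))`.
Because `S` is lower closed, every interval `[x_i, x_j]` of `P` lies in `S`, so `M Z = 1` is just
the defining recursion of `μ`; hence `E = Zᵀ` has inverse `Mᵀ`. Semimultiplicativity factors the
meet matrix as `R F R` with `F = (1 / f(x_i ∨ x_j))`, so the diagonal factors `R` cancel and
`A = Mᵀ F M`, whose entries are the double Möbius sums.
-/

open Matrix Finset

section Moebius

variable {P : Type*} [PartialOrder P] [LocallyFiniteOrder P] {k : Type*} [Ring k]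
  {mu : P → P → k}

theorem sum_Icc_moebius [DecidableEq P] (hmu_self : ∀ p, mu p p = 1)
    (hmu_lt : ∀ p q : P, p < q → mu p q = -∑ r ∈ Ico p q, mu p r) (p q : P) :
    ∑ z ∈ Icc p q, mu p z = if p = q then 1 else 0 := by
  by_cases hpq : p ≤ q
  · rcases hpq.eq_or_lt with rfl | hlt
    · simp [hmu_self]
    · rw [if_neg hlt.ne, Icc_eq_cons_Ico hpq, sum_cons, hmu_lt p q hlt, neg_add_cancel]
  · rw [Icc_eq_empty hpq, sum_empty, if_neg (fun h => hpq h.le)]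

variable [DecidableRel ((· ≤ ·) : P → P → Prop)] {ι : Type*} [Fintype ι] [DecidableEq ι]

theorem moebius_mul_zeta_eq_one (hmu_self : ∀ p, mu p p = 1)
    (hmu_lt : ∀ p q : P, p < q → mu p q = -∑ r ∈ Ico p q, mu p r)
    (hmu_nle : ∀ p q : P, ¬ p ≤ q → mu p q = 0)
    {x : ι → P} (hinj : Function.Injective x) (hconv : (Set.range x).OrdConnected) :
    (of fun i j => mu (x i) (x j)) * (of fun i j => if x i ≤ x j then (1 : k) else 0) = 1 := by
  classical
  ext i j
  have hterm : ∀ m, mu (x i) (x m) * (if x m ≤ x j then 1 else 0) =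
      if x m ∈ Icc (x i) (x j) then mu (x i) (x m) else 0 := by
    intro m
    by_cases him : x i ≤ x m
    · by_cases hmj : x m ≤ x j <;> simp [him, hmj]
    · simp [him, hmu_nle _ _ him]
  calc ((of fun i j => mu (x i) (x j)) * of fun i j => if x i ≤ x j then (1 : k) else 0) i j
      = ∑ m ∈ (Icc (x i) (x j)).preimage x hinj.injOn, mu (x i) (x m) := by
        simp only [mul_apply, of_apply, hterm, ← sum_filter]
        congr 1
        ext m
        simp
    _ = ∑ z ∈ Icc (x i) (x j), mu (x i) z :=
        sum_preimage x _ _ _ fun z hz hzx =>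
          (hzx (hconv.out ⟨i, rfl⟩ ⟨j, rfl⟩ (mem_Icc.mp hz))).elim
    _ = (1 : Matrix ι ι k) i j := by
        simp only [sum_Icc_moebius hmu_self hmu_lt, hinj.eq_iff, one_apply]

end Moebius

theorem meet_matrix_eq_diagonal_mul_join_inv_mul_diagonal {P : Type*} [Lattice P]
    {K : Type*} [Field K] {ι : Type*} [Fintype ι] [DecidableEq ι] {f : P → K} (hf : ∀ p, f p ≠ 0)
    (hsemi : ∀ p q : P, f (p ⊓ q) * f (p ⊔ q) = f p * f q) (x : ι → P) :
    (of fun i j => f (x i ⊓ x j)) =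
      diagonal (fun i => f (x i)) * (of fun i j => (f (x i ⊔ x j))⁻¹) *
        diagonal (fun i => f (x i)) := by
  ext i j
  rw [mul_diagonal, diagonal_mul, of_apply, of_apply, mul_right_comm,
    eq_mul_inv_iff_mul_eq₀ (hf _), hsemi]

theorem Matrix.inv_mul_mul_mul_inv_of_isUnit_det {n : Type*} [Fintype n] [DecidableEq n]
    {K : Type*} [CommRing K] {R S : Matrix n n K} (hR : IsUnit R.det) (hS : IsUnit S.det)
    (E E' F : Matrix n n K) :
    (R * E)⁻¹ * (R * F * S) * (E' * S)⁻¹ = E⁻¹ * F * E'⁻¹ := by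
  rw [mul_inv_rev, mul_inv_rev]
  simp only [Matrix.mul_assoc]
  rw [nonsing_inv_mul_cancel_left _ _ hR]
  simp only [← Matrix.mul_assoc]
  rw [mul_nonsing_inv_cancel_right _ _ hS]

theorem entries_of_Linv_A_general
    {P : Type*} [Lattice P] [LocallyFiniteOrder P]
    [DecidableRel ((· ≤ ·) : P → P → Prop)]
    (mu : P → P → ℂ)
    (hmu_self : ∀ p, mu p p = 1)
    (hmu_lt : ∀ p q : P, p < q → mu p q = -∑ r ∈ Finset.Ico p q, mu p r)
    (hmu_nle : ∀ p q : P, ¬ p ≤ q → mu p q = 0)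
    (f : P → ℂ) (hf : ∀ p, f p ≠ 0)
    (hsemi : ∀ p q : P, f (p ⊓ q) * f (p ⊔ q) = f p * f q)
    {n : ℕ} (x : Fin n → P) (hinj : Function.Injective x)
    (hlower : ∀ i (z : P), z ≤ x i → ∃ k, x k = z)
    (l : Fin n → ℂ)
    (hl0 : ∀ i, l i ≠ 0)
    (E : Matrix (Fin n) (Fin n) ℂ)
    (hE : ∀ i j, E i j = if x j ≤ x i then 1 else 0)
    (L R A : Matrix (Fin n) (Fin n) ℂ)
    (hL : L = Matrix.diagonal l)
    (hR : R = Matrix.diagonal (fun i => f (x i)))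
    (hA : A = (R * E)⁻¹ * (Matrix.of fun i j => f (x i ⊓ x j)) * (Eᵀ * R)⁻¹) :
    ∀ i j, (L⁻¹ * A) i j =
      (l i)⁻¹ * ∑ α : Fin n, ∑ β : Fin n,
        mu (x α) (x i) * mu (x β) (x j) / f (x α ⊔ x β) := by
  set Z : Matrix (Fin n) (Fin n) ℂ := of fun i j => if x i ≤ x j then 1 else 0
  set M : Matrix (Fin n) (Fin n) ℂ := of fun i j => mu (x i) (x j)
  have hconv : (Set.range x).OrdConnected :=
    IsLowerSet.ordConnected fun _ z hz ⟨i, hi⟩ => hlower i z (hi ▸ hz)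
  have hZM : Z * M = 1 :=
    mul_eq_one_comm.mp (moebius_mul_zeta_eq_one hmu_self hmu_lt hmu_nle hinj hconv)
  have hEZ : E = Zᵀ := by ext i j; exact hE i j
  have hEinv : E⁻¹ = Mᵀ := inv_eq_left_inv (by rw [hEZ, ← transpose_mul, hZM, transpose_one])
  have hETinv : Eᵀ⁻¹ = M := inv_eq_right_inv (by rw [hEZ, transpose_transpose, hZM])
  have hRdet : IsUnit R.det := by
    rw [hR, det_diagonal]
    exact (prod_ne_zero_iff.mpr fun i _ => hf (x i)).isUnit
  have hLinv : L⁻¹ = diagonal fun i => (l i)⁻¹ :=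
    inv_eq_right_inv (by simp [hL, diagonal_mul_diagonal, hl0])
  have hAM : A = Mᵀ * (of fun i j => (f (x i ⊔ x j))⁻¹) * M := by
    rw [hA, meet_matrix_eq_diagonal_mul_join_inv_mul_diagonal hf hsemi, ← hR,
      inv_mul_mul_mul_inv_of_isUnit_det hRdet hRdet, hEinv, hETinv]
  intro i j
  rw [hLinv, hAM, diagonal_mul]
  congr 1
  simp only [mul_apply, transpose_apply, M, of_apply, sum_mul]
  rw [sum_comm]
  refine sum_congr rfl fun α _ => sum_congr rfl fun β _ => ?_
  ring

/-- For lower closed `S`, the entries of `L⁻¹ * A` are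
`(L⁻¹ A)_{ij} = l i⁻¹ ∑_{α,β} μ(x α, x i) μ(x β, x j) / f (x α ∨ x β)`. -/
theorem entries_of_Linv_A
    {P : Type*} [Lattice P] [OrderBot P] [LocallyFiniteOrder P]
    [DecidableRel ((· ≤ ·) : P → P → Prop)]
    (mu : P → P → ℂ)
    (hmu_self : ∀ p, mu p p = 1)
    (hmu_lt : ∀ p q : P, p < q → mu p q = -∑ r ∈ Finset.Ico p q, mu p r)
    (hmu_nle : ∀ p q : P, ¬ p ≤ q → mu p q = 0)
    (f : P → ℂ) (hf : ∀ p, f p ≠ 0)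
    (hsemi : ∀ p q : P, f (p ⊓ q) * f (p ⊔ q) = f p * f q)
    (g : P → ℂ) (hg : ∀ p, g p = (f p)⁻¹)
    {n : ℕ} (x : Fin n → P) (hinj : Function.Injective x)
    (hord : ∀ i j, x i ≤ x j → i ≤ j)
    (hlower : ∀ i (z : P), z ≤ x i → ∃ k, x k = z)
    (l : Fin n → ℂ)
    (hl : ∀ i, l i = ∑ z ∈ (Finset.Icc ⊥ (x i)).filter
        (fun z => ∀ j, j < i → ¬ z ≤ x j),
      ∑ w ∈ Finset.Icc ⊥ z, g w * mu w z)
    (hl0 : ∀ i, l i ≠ 0)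
    (E : Matrix (Fin n) (Fin n) ℂ)
    (hE : ∀ i j, E i j = if x j ≤ x i then 1 else 0)
    (L R A : Matrix (Fin n) (Fin n) ℂ)
    (hL : L = Matrix.diagonal l)
    (hR : R = Matrix.diagonal (fun i => f (x i)))
    (hA : A = (R * E)⁻¹ * (Matrix.of fun i j => f (x i ⊓ x j)) * (Eᵀ * R)⁻¹) :
    ∀ i j, (L⁻¹ * A) i j =
      (l i)⁻¹ * ∑ α : Fin n, ∑ β : Fin n,
        mu (x α) (x i) * mu (x β) (x j) / f (x α ⊔ x β) :=
  entries_of_Linv_A_general mu hmu_self hmu_lt hmu_nle f hf hsemi x hinj hlower l hl0 E hE L R A hL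
    hR hA
end

section
/- Let S = {x_1, …, x_n} be a finite factor closed set of positive integers with x_1 < x_2 < … < x_n, let f be a semimultiplicative arithmetical function with f(x) ≠ 0 for all positive integers x, and set g(x) = 1/f(x). Assume l_i = ∑_{z | x_i, z ∤ x_j for all j < i} (g *_D μ)(z) ≠ 0 for all i ∈ {1, …, n}. Then every λ ∈ ℂ for which (S)_f x = λ [S]_f x holds for some nonzero x ∈ ℂⁿ satisfies |λ| ≤ 2 · c_f⁻¹ · m_g⁻¹ · √(x_n) · ∑_{j=1}^n τ(x_j), where c_f = min_{1≤i,j≤n} |f(lcm(x_i, x_j))|, m_g = min_{1≤i≤n} |l_i|, and τ is the number-of-divisors function. -/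
/-!
Write `Δ = diag (f x_i)`. Semimultiplicativity gives `(S)_f = Δ K Δ` with `K = (1 / f [x_i, x_j])`
and `[S]_f = Δ (g (x_i, x_j)) Δ`. Since `S` is factor closed, `l_i = (g * μ)(x_i)` and Smith's
factorization reads `(g (x_i, x_j)) = E diag(l) Eᵀ`, where `E` is the divisibility matrix of `S`,
whose inverse `F` has entries `μ (x_i / x_j)`. Thus `λ` is a generalized eigenvalue of `F K Fᵀ`
with respect to `diag(l)`, and looking at a coordinate of maximal modulus of an eigenvector gives
`|λ| |l_i| ≤ ∑_j |(F K Fᵀ)_ij| ≤ c_f⁻¹ τ(x_i) ∑_j τ(x_j)`; finally `τ(x_i) ≤ 2 √x_i ≤ 2 √x_n`.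
-/

open Finset Matrix Function
open scoped ArithmeticFunction.Moebius

theorem lt_ciInf_of_finite {α β : Type*} [Finite α] [Nonempty α]
    [ConditionallyCompleteLinearOrder β] {φ : α → β} {b : β} (h : ∀ a, b < φ a) :
    b < ⨅ a, φ a := by
  obtain ⟨a, ha⟩ := exists_eq_ciInf_of_finite (f := φ)
  exact ha ▸ h a

namespace Nat

theorem card_divisors_le_two_mul_sqrt (m : ℕ) : (#m.divisors : ℝ) ≤ 2 * √m := by
  set small := m.divisors.filter (· ≤ m.sqrt)
  have h_small : #small ≤ m.sqrt := by
    simpa using card_le_card (s := small) (t := Icc 1 m.sqrt) fun d hd => by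
      simp only [small, mem_filter, mem_divisors] at hd
      exact mem_Icc.2 ⟨pos_of_dvd_of_pos hd.1.1 (pos_of_ne_zero hd.1.2), hd.2⟩
  -- `d ↦ m / d` sends the divisors above `√m` injectively to those below it
  have h_large : #(m.divisors.filter (¬ · ≤ m.sqrt)) ≤ #small := by
    refine card_le_card_of_injOn (m / ·) (fun d hd => ?_) (fun d₁ hd₁ d₂ hd₂ h => ?_)
    · simp only [coe_filter, Set.mem_ofPred_eq, mem_divisors, not_le] at hd
      simp only [small, coe_filter, Set.mem_ofPred_eq, mem_divisors]
      refine ⟨⟨div_dvd_of_dvd hd.1.1, hd.1.2⟩, le_of_lt_succ ?_⟩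
      exact (div_lt_iff_lt_mul (by omega)).2 ((lt_succ_sqrt m).trans_le (mul_le_mul_left _ hd.2))
    · simp only [coe_filter, Set.mem_ofPred_eq, mem_divisors] at hd₁ hd₂
      rw [← Nat.div_div_self hd₁.1.1 hd₁.1.2, ← Nat.div_div_self hd₂.1.1 hd₂.1.2]
      exact congrArg (m / ·) h
  rw [← card_filter_add_card_filter_not (s := m.divisors) (· ≤ m.sqrt)]
  have := Real.nat_sqrt_le_real_sqrt (a := m)
  push_cast
  linarith [(cast_le (α := ℝ)).2 h_small, (cast_le (α := ℝ)).2 h_large]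

theorem sum_divisors_filter_dvd_div {M : Type*} [AddCommMonoid M] {N a : ℕ} (hN : N ≠ 0)
    (ha : a ∣ N) (G : ℕ → M) :
    ∑ z ∈ N.divisors.filter (a ∣ ·), G (z / a) = ∑ d ∈ (N / a).divisors, G d := by
  have ha0 : 0 < a := pos_of_dvd_of_pos ha (pos_of_ne_zero hN)
  refine sum_nbij' (· / a) (a * ·) (fun z hz => ?_) (fun d hd => ?_) (fun z hz => ?_)
    (fun d _ => Nat.mul_div_cancel_left d ha0) (fun _ _ => rfl)
  · simp only [mem_filter, mem_divisors] at hz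
    exact mem_divisors.2 ⟨div_dvd_div hz.2 hz.1.1, (Nat.div_pos (le_of_dvd (by omega) ha) ha0).ne'⟩
  · have hdvd := (mem_divisors.1 hd).1
    simp only [mem_filter, mem_divisors]
    exact ⟨⟨(Nat.dvd_div_iff_mul_dvd ha).1 hdvd, hN⟩, dvd_mul_right a d⟩
  · exact Nat.mul_div_cancel' (mem_filter.1 hz).2

end Nat

namespace ArithmeticFunction

theorem sum_divisors_moebius (R : Type*) [Ring R] (n : ℕ) :
    ∑ d ∈ n.divisors, (μ d : R) = if n = 1 then 1 else 0 := by
  have := congr($(coe_moebius_mul_coe_zeta (R := R)) n)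
  rwa [coe_mul_zeta_apply, one_apply] at this

theorem sum_divisors_sum_mul_moebius {R : Type*} [CommRing R] (g : ℕ → R) {m : ℕ} (hm : 0 < m) :
    ∑ z ∈ m.divisors, ∑ w ∈ z.divisors, g w * μ (z / w) = g m := by
  refine sum_eq_iff_sum_mul_moebius_eq.2 (fun z _ => ?_) m hm
  rw [Nat.sum_divisorsAntidiagonal' (f := fun a b => (μ a : R) * g b)]
  exact sum_congr rfl fun _ _ => mul_comm _ _

end ArithmeticFunction

section FactorClosed

variable {ι : Type*} {x : ι → ℕ}

def IsFactorClosed (x : ι → ℕ) : Prop :=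
  ∀ i, ∀ z, z ∣ x i → z ∈ Set.range x

theorem sum_ite_dvd_eq_sum_divisors [Fintype ι] {M : Type*} [AddCommMonoid M]
    (hx : Injective x) {m : ℕ} (hm : m ≠ 0) (hcl : ∀ z, z ∣ m → z ∈ Set.range x) (G : ℕ → M) :
    ∑ k, (if x k ∣ m then G (x k) else 0) = ∑ z ∈ m.divisors, G z := by
  classical
  have himage : (univ.filter (x · ∣ m)).image x = m.divisors := by
    ext z
    simp only [mem_image, mem_filter, mem_univ, true_and, Nat.mem_divisors]
    exact ⟨fun ⟨k, hk, hkz⟩ => ⟨hkz ▸ hk, hm⟩, fun ⟨hz, _⟩ =>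
      (hcl z hz).imp fun k (hk : x k = z) => ⟨hk ▸ hz, hk⟩⟩
  rw [← sum_filter, ← himage, sum_image hx.injOn]

theorem IsFactorClosed.divisors_filter_not_dvd_lt_eq_singleton [LinearOrder ι]
    (hcl : IsFactorClosed x) (hpos : ∀ i, 0 < x i) (hx : StrictMono x) (i : ι)
    [DecidablePred fun z => ∀ j, j < i → ¬ z ∣ x j] :
    (x i).divisors.filter (fun z => ∀ j, j < i → ¬ z ∣ x j) = {x i} := by
  ext z
  simp only [mem_filter, Nat.mem_divisors, mem_singleton]
  constructor
  · rintro ⟨⟨hz, -⟩, hnot⟩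
    obtain ⟨k, rfl⟩ := hcl i z hz
    obtain hki | rfl | hik := lt_trichotomy k i
    · exact absurd dvd_rfl (hnot k hki)
    · rfl
    · exact absurd (Nat.le_of_dvd (hpos i) hz) (hx hik).not_ge
  · rintro rfl
    exact ⟨⟨dvd_rfl, (hpos i).ne'⟩, fun j hj hdvd => (Nat.le_of_dvd (hpos j) hdvd).not_gt (hx hj)⟩

variable (R : Type*)

def divisorMatrix [Zero R] [One R] (x : ι → ℕ) : Matrix ι ι R :=
  of fun i j => if x j ∣ x i then 1 else 0

def moebiusMatrix [Zero R] [IntCast R] (x : ι → ℕ) : Matrix ι ι R :=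
  of fun i j => if x j ∣ x i then (μ (x i / x j) : R) else 0

theorem norm_moebiusMatrix_apply_le (i k : ι) :
    ‖moebiusMatrix ℂ x i k‖ ≤ if x k ∣ x i then 1 else 0 := by
  by_cases hki : x k ∣ x i
  · simpa [moebiusMatrix, hki, Complex.norm_intCast] using
      (Int.cast_le (R := ℝ)).2 (ArithmeticFunction.abs_moebius_le_one (n := x i / x k))
  · simp [moebiusMatrix, hki]

variable {R} [Fintype ι]

theorem IsFactorClosed.divisorMatrix_mul_moebiusMatrix [Ring R] [DecidableEq ι]
    (hcl : IsFactorClosed x) (hx : Injective x) (hpos : ∀ i, 0 < x i) :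
    divisorMatrix R x * moebiusMatrix R x = 1 := by
  ext i j
  have hentry : (divisorMatrix R x * moebiusMatrix R x) i j
      = ∑ z ∈ (x i).divisors, if x j ∣ z then (μ (z / x j) : R) else 0 := by
    rw [mul_apply, ← sum_ite_dvd_eq_sum_divisors hx (hpos i).ne' (hcl i)]
    refine sum_congr rfl fun k _ => ?_
    by_cases hki : x k ∣ x i <;> simp [divisorMatrix, moebiusMatrix, hki]
  rw [hentry, ← sum_filter]
  by_cases hji : x j ∣ x i
  · rw [Nat.sum_divisors_filter_dvd_div (hpos i).ne' hji fun d => (μ d : R),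
      ArithmeticFunction.sum_divisors_moebius, one_apply]
    simp only [Nat.div_eq_iff_eq_mul_left (hpos j) hji, one_mul, hx.eq_iff]
  · rw [one_apply_ne (by rintro rfl; exact hji dvd_rfl)]
    refine sum_eq_zero fun z hz => absurd ?_ hji
    simp only [mem_filter, Nat.mem_divisors] at hz
    exact hz.2.trans hz.1.1

theorem IsFactorClosed.of_sum_divisors_gcd_eq_divisorMatrix_mul [CommSemiring R] [DecidableEq ι]
    (hcl : IsFactorClosed x) (hx : Injective x) (hpos : ∀ i, 0 < x i) (h : ℕ → R) :
    of (fun i j => ∑ d ∈ (Nat.gcd (x i) (x j)).divisors, h d)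
      = divisorMatrix R x * diagonal (h ∘ x) * (divisorMatrix R x)ᵀ := by
  ext i j
  rw [of_apply, ← sum_ite_dvd_eq_sum_divisors hx (Nat.gcd_pos_of_pos_left _ (hpos i)).ne'
    fun z hz => hcl i z (hz.trans (Nat.gcd_dvd_left _ _)), mul_apply]
  refine sum_congr rfl fun k _ => ?_
  by_cases hki : x k ∣ x i <;> by_cases hkj : x k ∣ x j <;>
    simp [divisorMatrix, hki, hkj, Nat.dvd_gcd_iff]

theorem IsFactorClosed.of_gcd_eq_divisorMatrix_mul [CommRing R] [DecidableEq ι]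
    (hcl : IsFactorClosed x) (hx : Injective x) (hpos : ∀ i, 0 < x i) (g : ℕ → R) :
    of (fun i j => g (Nat.gcd (x i) (x j)))
      = divisorMatrix R x * diagonal (fun i => ∑ w ∈ (x i).divisors, g w * μ (x i / w))
        * (divisorMatrix R x)ᵀ := by
  refine Eq.trans ?_ (hcl.of_sum_divisors_gcd_eq_divisorMatrix_mul hx hpos
    fun z => ∑ w ∈ z.divisors, g w * μ (z / w))
  ext i j
  exact (ArithmeticFunction.sum_divisors_sum_mul_moebius g
    (Nat.gcd_pos_of_pos_left _ (hpos i))).symm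

theorem IsFactorClosed.sum_norm_moebiusMatrix_le (hcl : IsFactorClosed x) (hx : Injective x)
    (hpos : ∀ i, 0 < x i) (i : ι) :
    ∑ k, ‖moebiusMatrix ℂ x i k‖ ≤ #(x i).divisors := by
  calc ∑ k, ‖moebiusMatrix ℂ x i k‖ ≤ ∑ k, if x k ∣ x i then (1 : ℝ) else 0 :=
        sum_le_sum fun k _ => norm_moebiusMatrix_apply_le i k
    _ = #(x i).divisors := by
        rw [sum_ite_dvd_eq_sum_divisors hx (hpos i).ne' (hcl i) fun _ => (1 : ℝ)]
        simp

end FactorClosed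

section Matrices

variable {ι : Type*} [Fintype ι]

theorem exists_ne_zero_mulVec_eq_smul_mulVec_of_congr {R : Type*} [CommRing R] [DecidableEq ι]
    {Δ Δ' E F K D : Matrix ι ι R} {lam : R} {v : ι → R} (hΔ : Δ' * Δ = 1) (hEF : E * F = 1)
    (hv : v ≠ 0) (h : (Δ * K * Δ) *ᵥ v = lam • (Δ * (E * D * Eᵀ) * Δ) *ᵥ v) :
    ∃ u ≠ 0, (F * K * Fᵀ) *ᵥ u = lam • D *ᵥ u := by
  have hFE' : Fᵀ * Eᵀ = 1 := by rw [← transpose_mul, hEF, transpose_one]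
  have hA : F * Δ' * (Δ * K * Δ) = F * K * Fᵀ * (Eᵀ * Δ) := by
    calc F * Δ' * (Δ * K * Δ) = F * (Δ' * Δ) * K * Δ := by simp only [Matrix.mul_assoc]
      _ = F * K * (Fᵀ * Eᵀ) * Δ := by rw [hΔ, hFE', Matrix.mul_one, Matrix.mul_one]
      _ = F * K * Fᵀ * (Eᵀ * Δ) := by simp only [Matrix.mul_assoc]
  have hB : F * Δ' * (Δ * (E * D * Eᵀ) * Δ) = D * (Eᵀ * Δ) := by
    calc F * Δ' * (Δ * (E * D * Eᵀ) * Δ) = F * (Δ' * Δ) * E * D * (Eᵀ * Δ) := by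
          simp only [Matrix.mul_assoc]
      _ = D * (Eᵀ * Δ) := by rw [hΔ, Matrix.mul_one, mul_eq_one_comm.1 hEF, Matrix.one_mul]
  refine ⟨(Eᵀ * Δ) *ᵥ v, fun hu => hv ?_, ?_⟩
  · have hv_eq : (Δ' * Fᵀ) *ᵥ ((Eᵀ * Δ) *ᵥ v) = v := by
      rw [mulVec_mulVec, Matrix.mul_assoc, ← Matrix.mul_assoc Fᵀ, hFE', Matrix.one_mul, hΔ,
        one_mulVec]
    rw [← hv_eq, hu, mulVec_zero]
  · have := congrArg ((F * Δ') *ᵥ ·) h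
    simp only [mulVec_mulVec, mulVec_smul, hA, hB] at this
    simpa only [← mulVec_mulVec] using this

theorem exists_norm_mul_le_sum_norm_of_mulVec_eq {K : Type*} [NormedField K] [DecidableEq ι]
    {M : Matrix ι ι K} {d u : ι → K} {lam : K} (hu : u ≠ 0)
    (h : M *ᵥ u = lam • diagonal d *ᵥ u) : ∃ i, ‖lam‖ * ‖d i‖ ≤ ∑ j, ‖M i j‖ := by
  obtain ⟨j, hj⟩ := Function.ne_iff.1 hu
  obtain ⟨i, -, hi⟩ := exists_max_image univ (‖u ·‖) ⟨j, mem_univ j⟩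
  refine ⟨i, le_of_mul_le_mul_right ?_ ((norm_pos_iff.2 hj).trans_le (hi j (mem_univ j)))⟩
  calc ‖lam‖ * ‖d i‖ * ‖u i‖ = ‖(M *ᵥ u) i‖ := by
        rw [h, Pi.smul_apply, mulVec_diagonal, smul_eq_mul, norm_mul, norm_mul, mul_assoc]
    _ ≤ ∑ j, ‖M i j‖ * ‖u j‖ :=
        (norm_sum_le univ fun j => M i j * u j).trans_eq (by simp only [norm_mul])
    _ ≤ (∑ j, ‖M i j‖) * ‖u i‖ := by
        rw [sum_mul]
        exact sum_le_sum fun j _ => mul_le_mul_of_nonneg_left (hi j (mem_univ j)) (norm_nonneg _)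

theorem norm_mul_mul_transpose_apply_le {R : Type*} [NormedRing R] {F G K : Matrix ι ι R}
    {C : ℝ} (hK : ∀ k m, ‖K k m‖ ≤ C) (i j : ι) :
    ‖(F * K * Gᵀ) i j‖ ≤ C * (∑ k, ‖F i k‖) * ∑ m, ‖G j m‖ := by
  calc ‖(F * K * Gᵀ) i j‖ ≤ ∑ m, (∑ k, ‖F i k‖ * ‖K k m‖) * ‖G j m‖ := by
        simp only [mul_apply, transpose_apply]
        refine (norm_sum_le _ _).trans (sum_le_sum fun m _ => ?_)
        refine (norm_mul_le _ _).trans (mul_le_mul_of_nonneg_right ?_ (norm_nonneg _))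
        exact (norm_sum_le _ _).trans (sum_le_sum fun k _ => norm_mul_le _ _)
    _ ≤ ∑ m, (∑ k, ‖F i k‖ * C) * ‖G j m‖ := by
        gcongr with m _ k _
        exact hK k m
    _ = C * (∑ k, ‖F i k‖) * ∑ m, ‖G j m‖ := by
        rw [mul_sum, ← sum_mul]
        ring_nf

theorem of_eq_diagonal_mul_of_mul_diagonal {R : Type*} [CommSemiring R] [DecidableEq ι]
    (d : ι → R) {M N : ι → ι → R} (h : ∀ i j, M i j = d i * N i j * d j) :
    of M = diagonal d * of N * diagonal d := by
  ext i j
  simp [h, mul_diagonal, diagonal_mul]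

end Matrices

section Semimultiplicative

variable {K : Type*} [Field K] {f : ℕ → K} {ι : Type*} [Fintype ι] [DecidableEq ι]
  {x : ι → ℕ}

theorem eq_mul_inv_mul_of_mul_eq {p q r s : K} (hq : q ≠ 0) (h : p * q = r * s) :
    p = r * q⁻¹ * s := by
  rw [eq_div_of_mul_eq hq h, div_eq_mul_inv, mul_right_comm]

theorem of_gcd_eq_diagonal_mul_of_inv_lcm_mul_diagonal (hf : ∀ m, 0 < m → f m ≠ 0)
    (hsemi : ∀ a b, 0 < a → 0 < b → f (Nat.gcd a b) * f (Nat.lcm a b) = f a * f b)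
    (hpos : ∀ i, 0 < x i) :
    of (fun i j => f (Nat.gcd (x i) (x j)))
      = diagonal (f ∘ x) * of (fun i j => (f (Nat.lcm (x i) (x j)))⁻¹) * diagonal (f ∘ x) :=
  of_eq_diagonal_mul_of_mul_diagonal _ fun i j => eq_mul_inv_mul_of_mul_eq
    (hf _ (Nat.lcm_pos (hpos i) (hpos j))) (hsemi _ _ (hpos i) (hpos j))

theorem of_lcm_eq_diagonal_mul_of_inv_gcd_mul_diagonal (hf : ∀ m, 0 < m → f m ≠ 0)
    (hsemi : ∀ a b, 0 < a → 0 < b → f (Nat.gcd a b) * f (Nat.lcm a b) = f a * f b)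
    (hpos : ∀ i, 0 < x i) :
    of (fun i j => f (Nat.lcm (x i) (x j)))
      = diagonal (f ∘ x) * of (fun i j => (f (Nat.gcd (x i) (x j)))⁻¹) * diagonal (f ∘ x) :=
  of_eq_diagonal_mul_of_mul_diagonal _ fun i j => eq_mul_inv_mul_of_mul_eq
    (hf _ (Nat.gcd_pos_of_pos_left _ (hpos i)))
    ((mul_comm _ _).trans (hsemi _ _ (hpos i) (hpos j)))

end Semimultiplicative

section Bound

variable {ι : Type*} [Fintype ι] {x : ι → ℕ}

theorem IsFactorClosed.sum_norm_moebiusMatrix_mul_mul_transpose_le (hcl : IsFactorClosed x)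
    (hx : Injective x) (hpos : ∀ i, 0 < x i) {K : Matrix ι ι ℂ} {C : ℝ} (hC : 0 ≤ C)
    (hK : ∀ k m, ‖K k m‖ ≤ C) (i : ι) :
    ∑ j, ‖(moebiusMatrix ℂ x * K * (moebiusMatrix ℂ x)ᵀ) i j‖
      ≤ C * #(x i).divisors * ∑ j, (#(x j).divisors : ℝ) := by
  rw [mul_sum]
  refine sum_le_sum fun j _ => (norm_mul_mul_transpose_apply_le hK i j).trans ?_
  gcongr
  · exact hcl.sum_norm_moebiusMatrix_le hx hpos i
  · exact hcl.sum_norm_moebiusMatrix_le hx hpos j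

theorem IsFactorClosed.norm_le_of_mulVec_moebiusMatrix_eq [DecidableEq ι]
    (hcl : IsFactorClosed x) (hx : Injective x) (hpos : ∀ i, 0 < x i) {N : ℕ}
    (hN : ∀ i, x i ≤ N) {K : Matrix ι ι ℂ} {C m : ℝ} (hC : 0 ≤ C) (hK : ∀ k k', ‖K k k'‖ ≤ C)
    (hm : 0 < m) {d u : ι → ℂ} (hd : ∀ i, m ≤ ‖d i‖) (hu : u ≠ 0) {lam : ℂ}
    (h : (moebiusMatrix ℂ x * K * (moebiusMatrix ℂ x)ᵀ) *ᵥ u = lam • diagonal d *ᵥ u) :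
    ‖lam‖ ≤ 2 * C * m⁻¹ * √N * ∑ j, (#(x j).divisors : ℝ) := by
  obtain ⟨i, hi⟩ := exists_norm_mul_le_sum_norm_of_mulVec_eq hu h
  have hτ : (#(x i).divisors : ℝ) ≤ 2 * √N :=
    (Nat.card_divisors_le_two_mul_sqrt _).trans (by gcongr; exact hN i)
  calc ‖lam‖ ≤ ‖lam‖ * ‖d i‖ / m := by
        rw [le_div_iff₀ hm]
        exact mul_le_mul_of_nonneg_left (hd i) (norm_nonneg _)
    _ ≤ (C * #(x i).divisors * ∑ j, (#(x j).divisors : ℝ)) / m :=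
        div_le_div_of_nonneg_right
          (hi.trans (hcl.sum_norm_moebiusMatrix_mul_mul_transpose_le hx hpos hC hK i)) hm.le
    _ ≤ (C * (2 * √N) * ∑ j, (#(x j).divisors : ℝ)) / m := by gcongr
    _ = 2 * C * m⁻¹ * √N * ∑ j, (#(x j).divisors : ℝ) := by ring

end Bound

/-- For a factor closed set `S = {x 0 < … < x (n-1)}` of positive
integers and a nonvanishing semimultiplicative arithmetical function `f` with invertible
LCM matrix, every generalized eigenvalue `λ` of the GCD matrix `(S)_f` with respect to
the LCM matrix `[S]_f` satisfies
`|λ| ≤ 2 c_f⁻¹ m_g⁻¹ √(x (n-1)) ∑_j τ (x j)`. -/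
theorem gcd_wrt_lcm_eigenvalue_bound
    (f : ℕ → ℂ) (hf : ∀ m : ℕ, 0 < m → f m ≠ 0)
    (hsemi : ∀ a b : ℕ, 0 < a → 0 < b →
      f (Nat.gcd a b) * f (Nat.lcm a b) = f a * f b)
    (g : ℕ → ℂ) (hg : ∀ m : ℕ, g m = (f m)⁻¹)
    {n : ℕ} (hn : 0 < n)
    (x : Fin n → ℕ) (hpos : ∀ i, 0 < x i) (hmono : StrictMono x)
    (hfc : ∀ i, ∀ z : ℕ, z ∣ x i → ∃ k, x k = z)
    (l : Fin n → ℂ)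
    (hl : ∀ i, l i = ∑ z ∈ (Nat.divisors (x i)).filter
        (fun z => ∀ j, j < i → ¬ z ∣ x j),
      ∑ w ∈ Nat.divisors z, g w * ((ArithmeticFunction.moebius (z / w) : ℤ) : ℂ))
    (hl0 : ∀ i, l i ≠ 0)
    (lam : ℂ) (v : Fin n → ℂ) (hv : v ≠ 0)
    (heig : (Matrix.of fun i j => f (Nat.gcd (x i) (x j))).mulVec v =
      lam • (Matrix.of fun i j => f (Nat.lcm (x i) (x j))).mulVec v) :
    ‖lam‖ ≤
      2 * (⨅ p : Fin n × Fin n, ‖f (Nat.lcm (x p.1) (x p.2))‖)⁻¹ *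
        (⨅ i, ‖l i‖)⁻¹ *
        Real.sqrt (x ⟨n - 1, Nat.sub_lt hn one_pos⟩) *
        ∑ j : Fin n, ((Nat.divisors (x j)).card : ℝ) := by
  have : Nonempty (Fin n) := ⟨⟨0, hn⟩⟩
  have hl_eq : l = fun i => ∑ w ∈ (x i).divisors, g w * μ (x i / w) := funext fun i => by
    rw [hl, IsFactorClosed.divisors_filter_not_dvd_lt_eq_singleton hfc hpos hmono, sum_singleton]
  have hB : of (fun i j => f (Nat.lcm (x i) (x j)))
      = diagonal (f ∘ x) * (divisorMatrix ℂ x * diagonal l * (divisorMatrix ℂ x)ᵀ)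
        * diagonal (f ∘ x) := by
    rw [of_lcm_eq_diagonal_mul_of_inv_gcd_mul_diagonal hf hsemi hpos, hl_eq,
      ← IsFactorClosed.of_gcd_eq_divisorMatrix_mul hfc hmono.injective hpos]
    simp only [hg]
  rw [of_gcd_eq_diagonal_mul_of_inv_lcm_mul_diagonal hf hsemi hpos, hB] at heig
  obtain ⟨u, hu, hFKF⟩ := exists_ne_zero_mulVec_eq_smul_mulVec_of_congr
    (Δ' := diagonal fun i => (f (x i))⁻¹)
    (by rw [diagonal_mul_diagonal]; simp [fun i => inv_mul_cancel₀ (hf _ (hpos i))])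
    (IsFactorClosed.divisorMatrix_mul_moebiusMatrix hfc hmono.injective hpos) hv heig
  have hc : 0 < ⨅ p : Fin n × Fin n, ‖f (Nat.lcm (x p.1) (x p.2))‖ :=
    lt_ciInf_of_finite fun p => norm_pos_iff.2 (hf _ (Nat.lcm_pos (hpos _) (hpos _)))
  refine IsFactorClosed.norm_le_of_mulVec_moebiusMatrix_eq hfc hmono.injective hpos
    (fun i => hmono.monotone (Fin.le_def.2 (Nat.le_sub_one_of_lt i.isLt))) (inv_nonneg.2 hc.le)
    (fun k k' => (norm_inv _).trans_le (inv_anti₀ hc (ciInf_le (Finite.bddBelow_range _) (k, k'))))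
    (lt_ciInf_of_finite fun i => norm_pos_iff.2 (hl0 i)) (ciInf_le (Finite.bddBelow_range _)) hu
    hFKF
end
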